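/- arXiv:1201.3500 — 5 statements merged into one kernel-verified Lean document; each statement's English description precedes it below -/
import Mathlib

section
/- The operator Φ_t has a unique fixed point f_t = (f_{t,1}, f_{t,2}) in B(I, ℝ²); moreover f_t is continuous on I and satisfies f_t(x_i) = (y_i, z_i) for every i = 0, 1, …, N. -/
open Set

/-- The affine contractive homeomorphism `L n` mapping `I = [x 0, x N]` onto the
`n`-th subinterval `[x n, x (n+1)]`: `L n u = a_n u + b_n`. -/
noncomputable def LMap {N : ℕ} (x : Fin (N + 1) → ℝ) (n : Fin N) (u : ℝ) : ℝ :=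
  ((x n.succ - x n.castSucc) / (x (Fin.last N) - x 0)) * u +
    (x (Fin.last N) * x n.castSucc - x 0 * x n.succ) / (x (Fin.last N) - x 0)

/-- `f` is a fixed point of the operator `Φ_t`, i.e. for every `n` and every
`u ∈ I`, `f (L_n u) = F_n (u, f u)`, where
`F_n (u, y, z) = (α_n y + β_n z + p_n u, γ_n z + q_n u)` and the linear polynomials
`p_n u = (t n).1.1 * u + (t n).1.2`, `q_n u = (t n).2.1 * u + (t n).2.2`. -/
def FixEq {N : ℕ} (x : Fin (N + 1) → ℝ) (α β γ : Fin N → ℝ)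
    (t : Fin N → (ℝ × ℝ) × (ℝ × ℝ)) (f : ℝ → ℝ × ℝ) : Prop :=
  ∀ n : Fin N, ∀ u ∈ Icc (x 0) (x (Fin.last N)),
    f (LMap x n u) =
      (α n * (f u).1 + β n * (f u).2 + ((t n).1.1 * u + (t n).1.2),
       γ n * (f u).2 + ((t n).2.1 * u + (t n).2.2))

/-- `f` belongs to `B(I, ℝ²)`, the set of bounded functions on `I = [x 0, x N]`. -/
def BddOnI {N : ℕ} (x : Fin (N + 1) → ℝ) (f : ℝ → ℝ × ℝ) : Prop :=
  ∃ M : ℝ, ∀ u ∈ Icc (x 0) (x (Fin.last N)), ‖f u‖ ≤ M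

/-!
The system is triangular: the second component of `Φ_t` does not involve the first, and once it
is known, the first component is again a scalar problem, with the continuous forcing
`β_n f₂ + p_n`. So it suffices to solve `f (L_n u) = c_n • f u + r_n u` (for `f` with values in
a Banach space) with `|c_n| < 1`. On the closed set of continuous functions on `I` with the
prescribed end values, the join-up conditions make the `N` pieces of `Φ f` agree at the knots, so
`Φ` maps this set to itself; it contracts the sup distance by `max_n |c_n|`, and Banach's theorem
gives a continuous fixed point. The same contraction estimate, iterated, forces any bounded
solution to agree with it on `I`.
-/

open Filter Topology

theorem Icc_subset_iUnion_Icc_castSucc_succ {α : Type*} [LinearOrder α] :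
    ∀ {N : ℕ}, 0 < N → ∀ x : Fin (N + 1) → α,
      Icc (x 0) (x (Fin.last N)) ⊆ ⋃ n : Fin N, Icc (x n.castSucc) (x n.succ)
  | 1, _, _, _, hv => mem_iUnion.2 ⟨0, hv⟩
  | N + 2, _, x, v, hv => by
    by_cases h : v ≤ x (Fin.last (N + 1)).castSucc
    · obtain ⟨n, hn⟩ := mem_iUnion.1 <|
        Icc_subset_iUnion_Icc_castSucc_succ N.succ_pos (x ∘ Fin.castSucc) ⟨hv.1, h⟩
      exact mem_iUnion.2 ⟨n.castSucc, hn⟩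
    · exact mem_iUnion.2 ⟨Fin.last _, (not_le.1 h).le, hv.2⟩

theorem eq_zero_of_norm_le_mul_norm {α E : Type*} [NormedAddCommGroup E] {s : Set α}
    {h : α → E} {M K : ℝ} (hM : ∀ v ∈ s, ‖h v‖ ≤ M) (hK₀ : 0 ≤ K) (hK : K < 1)
    (hle : ∀ v ∈ s, ∃ u ∈ s, ‖h v‖ ≤ K * ‖h u‖) {v : α} (hv : v ∈ s) : h v = 0 := by
  have hpow : ∀ k : ℕ, ∀ v ∈ s, ‖h v‖ ≤ K ^ k * M := by
    intro k
    induction k with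
    | zero => simpa using hM
    | succ k ih =>
      intro v hv
      obtain ⟨u, hu, hvu⟩ := hle v hv
      calc ‖h v‖ ≤ K * ‖h u‖ := hvu
        _ ≤ K * (K ^ k * M) := by gcongr; exact ih u hu
        _ = K ^ (k + 1) * M := by ring
  have hlim : Tendsto (fun k : ℕ => K ^ k * M) atTop (𝓝 0) := by
    simpa using (tendsto_pow_atTop_nhds_zero_of_lt_one hK₀ hK).mul_const M
  exact norm_le_zero_iff.1 (ge_of_tendsto' hlim fun k => hpow k v hv)

theorem exists_lt_one_forall_abs_le {ι : Type*} [Fintype ι] {c : ι → ℝ}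
    (hc : ∀ i, |c i| < 1) : ∃ K : NNReal, K < 1 ∧ ∀ i, |c i| ≤ K :=
  ⟨Finset.univ.sup fun i => ‖c i‖₊,
    (Finset.sup_lt_iff zero_lt_one).2 fun i _ => by simpa [← NNReal.coe_lt_coe] using hc i,
    fun i => by
      simpa [← NNReal.coe_le_coe] using Finset.le_sup (f := fun i => ‖c i‖₊) (Finset.mem_univ i)⟩

section Glue

variable {ι α E : Type*} [Zero E]

open Classical in
/-- `0` off `⋃ i, s i`; on an overlap an arbitrary piece is used. -/
noncomputable def glue (s : ι → Set α) (φ : ι → α → E) (v : α) : E :=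
  if h : ∃ i, v ∈ s i then φ h.choose v else 0

theorem glue_eq {s : ι → Set α} {φ : ι → α → E}
    (hφ : ∀ i j v, v ∈ s i → v ∈ s j → φ i v = φ j v) {i : ι} {v : α} (hv : v ∈ s i) :
    glue s φ v = φ i v := by
  have h : ∃ i, v ∈ s i := ⟨i, hv⟩
  rw [glue, dif_pos h]
  exact hφ _ _ _ h.choose_spec hv

theorem continuousOn_glue [TopologicalSpace α] [TopologicalSpace E] [Finite ι]
    {s : ι → Set α} {φ : ι → α → E} (hs : ∀ i, IsClosed (s i))
    (hφc : ∀ i, ContinuousOn (φ i) (s i)) (hφ : ∀ i j v, v ∈ s i → v ∈ s j → φ i v = φ j v) :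
    ContinuousOn (glue s φ) (⋃ i, s i) :=
  (locallyFinite_of_finite s).continuousOn_iUnion hs fun i =>
    (hφc i).congr fun _ hv => glue_eq hφ hv

end Glue

section Affine

variable {N : ℕ} {x : Fin (N + 1) → ℝ}

noncomputable def LMapInv (x : Fin (N + 1) → ℝ) (n : Fin N) (v : ℝ) : ℝ :=
  x 0 + (x (Fin.last N) - x 0) * (v - x n.castSucc) / (x n.succ - x n.castSucc)

theorem StrictMono.zero_lt_last (hx : StrictMono x) (hN : 0 < N) : x 0 < x (Fin.last N) :=
  hx (Fin.lt_def.2 hN)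

theorem LMap_zero (hx : StrictMono x) (hN : 0 < N) (n : Fin N) :
    LMap x n (x 0) = x n.castSucc := by
  have := (sub_pos.2 (hx.zero_lt_last hN)).ne'
  unfold LMap; field_simp; ring

theorem LMap_last (hx : StrictMono x) (hN : 0 < N) (n : Fin N) :
    LMap x n (x (Fin.last N)) = x n.succ := by
  have := (sub_pos.2 (hx.zero_lt_last hN)).ne'
  unfold LMap; field_simp; ring

theorem LMap_LMapInv (hx : StrictMono x) (hN : 0 < N) (n : Fin N) (v : ℝ) :
    LMap x n (LMapInv x n v) = v := by
  have := (sub_pos.2 (hx.zero_lt_last hN)).ne'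
  have := (sub_pos.2 (hx n.castSucc_lt_succ)).ne'
  unfold LMap LMapInv; field_simp; ring

theorem LMapInv_LMap (hx : StrictMono x) (hN : 0 < N) (n : Fin N) (u : ℝ) :
    LMapInv x n (LMap x n u) = u := by
  have := (sub_pos.2 (hx.zero_lt_last hN)).ne'
  have := (sub_pos.2 (hx n.castSucc_lt_succ)).ne'
  unfold LMap LMapInv; field_simp; ring

theorem monotone_LMap (hx : StrictMono x) (hN : 0 < N) (n : Fin N) : Monotone (LMap x n) := by
  have := sub_pos.2 (hx.zero_lt_last hN)
  have := sub_pos.2 (hx n.castSucc_lt_succ)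
  intro u v huv
  unfold LMap
  gcongr

theorem monotone_LMapInv (hx : StrictMono x) (hN : 0 < N) (n : Fin N) :
    Monotone (LMapInv x n) := by
  have := sub_pos.2 (hx.zero_lt_last hN)
  have := sub_pos.2 (hx n.castSucc_lt_succ)
  intro u v huv
  unfold LMapInv
  gcongr

theorem continuous_LMapInv (n : Fin N) : Continuous (LMapInv x n) := by
  unfold LMapInv; fun_prop

theorem LMap_mem_Icc (hx : StrictMono x) (hN : 0 < N) (n : Fin N) {u : ℝ}
    (hu : u ∈ Icc (x 0) (x (Fin.last N))) :
    LMap x n u ∈ Icc (x n.castSucc) (x n.succ) := by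
  rw [← LMap_zero hx hN, ← LMap_last hx hN]
  exact (monotone_LMap hx hN n).mapsTo_Icc hu

theorem LMapInv_mem_Icc (hx : StrictMono x) (hN : 0 < N) (n : Fin N) {v : ℝ}
    (hv : v ∈ Icc (x n.castSucc) (x n.succ)) :
    LMapInv x n v ∈ Icc (x 0) (x (Fin.last N)) := by
  rw [← LMapInv_LMap hx hN n (x 0), ← LMapInv_LMap hx hN n (x (Fin.last N)), LMap_zero hx hN,
    LMap_last hx hN]
  exact (monotone_LMapInv hx hN n).mapsTo_Icc hv

theorem exists_LMap_eq (hx : StrictMono x) (hN : 0 < N) {v : ℝ}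
    (hv : v ∈ Icc (x 0) (x (Fin.last N))) :
    ∃ n, ∃ u ∈ Icc (x 0) (x (Fin.last N)), LMap x n u = v := by
  obtain ⟨n, hn⟩ := mem_iUnion.1 (Icc_subset_iUnion_Icc_castSucc_succ hN x hv)
  exact ⟨n, _, LMapInv_mem_Icc hx hN n hn, LMap_LMapInv hx hN n v⟩

theorem StrictMono.eq_of_mem_Icc_of_lt (hx : StrictMono x) {n m : Fin N} (hnm : n < m) {v : ℝ}
    (hn : v ∈ Icc (x n.castSucc) (x n.succ)) (hm : v ∈ Icc (x m.castSucc) (x m.succ)) :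
    n.succ = m.castSucc ∧ v = x n.succ := by
  have hle : n.succ ≤ m.castSucc := Fin.succ_le_castSucc_iff.2 hnm
  have hv : v = x n.succ := le_antisymm hn.2 ((hx.monotone hle).trans hm.1)
  refine ⟨hle.antisymm ?_, hv⟩
  exact hx.le_iff_le.1 (hm.1.trans hv.le)

end Affine

section Operator

variable {E : Type*} [NormedAddCommGroup E] [NormedSpace ℝ E] {N : ℕ} {x : Fin (N + 1) → ℝ}
  {c : Fin N → ℝ} {r : Fin N → ℝ → E} {w : Fin (N + 1) → E}

/-- `h = Φ g` on `I`, for the model `F_n (u, v) = c_n • v + r_n u` of the paper's maps `F_n`. -/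
def IsPhiImage (x : Fin (N + 1) → ℝ) (c : Fin N → ℝ) (r : Fin N → ℝ → E) (g h : ℝ → E) :
    Prop :=
  ∀ n, ∀ u ∈ Icc (x 0) (x (Fin.last N)), h (LMap x n u) = c n • g u + r n u

def JoinUp (x : Fin (N + 1) → ℝ) (c : Fin N → ℝ) (r : Fin N → ℝ → E) (w : Fin (N + 1) → E) :
    Prop :=
  ∀ n, c n • w 0 + r n (x 0) = w n.castSucc ∧
    c n • w (Fin.last N) + r n (x (Fin.last N)) = w n.succ

noncomputable def phiPiece (x : Fin (N + 1) → ℝ) (c : Fin N → ℝ) (r : Fin N → ℝ → E)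
    (g : ℝ → E) (n : Fin N) (v : ℝ) : E :=
  c n • g (LMapInv x n v) + r n (LMapInv x n v)

noncomputable def phi (x : Fin (N + 1) → ℝ) (c : Fin N → ℝ) (r : Fin N → ℝ → E) (g : ℝ → E) :
    ℝ → E :=
  glue (fun n => Icc (x n.castSucc) (x n.succ)) (phiPiece x c r g)

theorem phiPiece_LMap (hx : StrictMono x) (hN : 0 < N) (g : ℝ → E) (n : Fin N) (u : ℝ) :
    phiPiece x c r g n (LMap x n u) = c n • g u + r n u := by
  rw [phiPiece, LMapInv_LMap hx hN]

theorem phiPiece_castSucc (hx : StrictMono x) (hN : 0 < N) (hw : JoinUp x c r w) {g : ℝ → E}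
    (hg : g (x 0) = w 0) (n : Fin N) : phiPiece x c r g n (x n.castSucc) = w n.castSucc := by
  rw [← LMap_zero hx hN, phiPiece_LMap hx hN, hg, (hw n).1]

theorem phiPiece_succ (hx : StrictMono x) (hN : 0 < N) (hw : JoinUp x c r w) {g : ℝ → E}
    (hg : g (x (Fin.last N)) = w (Fin.last N)) (n : Fin N) :
    phiPiece x c r g n (x n.succ) = w n.succ := by
  rw [← LMap_last hx hN, phiPiece_LMap hx hN, hg, (hw n).2]

theorem phiPiece_agree (hx : StrictMono x) (hN : 0 < N) (hw : JoinUp x c r w) {g : ℝ → E}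
    (hg₀ : g (x 0) = w 0) (hg₁ : g (x (Fin.last N)) = w (Fin.last N)) (n m : Fin N) (v : ℝ)
    (hn : v ∈ Icc (x n.castSucc) (x n.succ)) (hm : v ∈ Icc (x m.castSucc) (x m.succ)) :
    phiPiece x c r g n v = phiPiece x c r g m v := by
  have key : ∀ {n m : Fin N}, n < m → v ∈ Icc (x n.castSucc) (x n.succ) →
      v ∈ Icc (x m.castSucc) (x m.succ) → phiPiece x c r g n v = phiPiece x c r g m v := by
    intro n m hnm hn hm
    obtain ⟨hknot, rfl⟩ := hx.eq_of_mem_Icc_of_lt hnm hn hm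
    rw [phiPiece_succ hx hN hw hg₁, hknot, phiPiece_castSucc hx hN hw hg₀]
  rcases lt_trichotomy n m with hnm | rfl | hmn
  · exact key hnm hn hm
  · rfl
  · exact (key hmn hm hn).symm

theorem phi_eq_phiPiece (hx : StrictMono x) (hN : 0 < N) (hw : JoinUp x c r w) {g : ℝ → E}
    (hg₀ : g (x 0) = w 0) (hg₁ : g (x (Fin.last N)) = w (Fin.last N)) {n : Fin N} {v : ℝ}
    (hv : v ∈ Icc (x n.castSucc) (x n.succ)) : phi x c r g v = phiPiece x c r g n v :=
  glue_eq (phiPiece_agree hx hN hw hg₀ hg₁) hv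

theorem isPhiImage_phi (hx : StrictMono x) (hN : 0 < N) (hw : JoinUp x c r w) {g : ℝ → E}
    (hg₀ : g (x 0) = w 0) (hg₁ : g (x (Fin.last N)) = w (Fin.last N)) :
    IsPhiImage x c r g (phi x c r g) := fun n u hu => by
  rw [phi_eq_phiPiece hx hN hw hg₀ hg₁ (LMap_mem_Icc hx hN n hu), phiPiece_LMap hx hN]

theorem phi_apply_knot (hx : StrictMono x) (hN : 0 < N) (hw : JoinUp x c r w) {g : ℝ → E}
    (hg₀ : g (x 0) = w 0) (hg₁ : g (x (Fin.last N)) = w (Fin.last N)) (i : Fin (N + 1)) :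
    phi x c r g (x i) = w i := by
  induction i using Fin.cases with
  | zero =>
    have h0 : (⟨0, hN⟩ : Fin N).castSucc = 0 := rfl
    rw [← h0, phi_eq_phiPiece hx hN hw hg₀ hg₁ (left_mem_Icc.2 (hx Fin.castSucc_lt_succ).le),
      phiPiece_castSucc hx hN hw hg₀]
  | succ n =>
    rw [phi_eq_phiPiece hx hN hw hg₀ hg₁ (right_mem_Icc.2 (hx Fin.castSucc_lt_succ).le),
      phiPiece_succ hx hN hw hg₁]

theorem continuousOn_phi (hx : StrictMono x) (hN : 0 < N) (hw : JoinUp x c r w)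
    (hr : ∀ n, ContinuousOn (r n) (Icc (x 0) (x (Fin.last N)))) {g : ℝ → E}
    (hg : ContinuousOn g (Icc (x 0) (x (Fin.last N))))
    (hg₀ : g (x 0) = w 0) (hg₁ : g (x (Fin.last N)) = w (Fin.last N)) :
    ContinuousOn (phi x c r g) (Icc (x 0) (x (Fin.last N))) := by
  refine (continuousOn_glue (fun _ => isClosed_Icc) (fun n => ?_)
    (phiPiece_agree hx hN hw hg₀ hg₁)).mono (Icc_subset_iUnion_Icc_castSucc_succ hN x)
  have hL : MapsTo (LMapInv x n) (Icc (x n.castSucc) (x n.succ))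
      (Icc (x 0) (x (Fin.last N))) := fun _ => LMapInv_mem_Icc hx hN n
  exact (continuousOn_const.smul (hg.comp (continuous_LMapInv n).continuousOn hL)).add
    ((hr n).comp (continuous_LMapInv n).continuousOn hL)

theorem IsPhiImage.exists_norm_sub_le (hx : StrictMono x) (hN : 0 < N) {K : ℝ}
    (hK : ∀ n, |c n| ≤ K) {g₁ g₂ h₁ h₂ : ℝ → E} (h₁g₁ : IsPhiImage x c r g₁ h₁)
    (h₂g₂ : IsPhiImage x c r g₂ h₂) {v : ℝ} (hv : v ∈ Icc (x 0) (x (Fin.last N))) :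
    ∃ u ∈ Icc (x 0) (x (Fin.last N)), ‖h₁ v - h₂ v‖ ≤ K * ‖g₁ u - g₂ u‖ := by
  obtain ⟨n, u, hu, rfl⟩ := exists_LMap_eq hx hN hv
  refine ⟨u, hu, ?_⟩
  rw [h₁g₁ n u hu, h₂g₂ n u hu, add_sub_add_right_eq_sub, ← smul_sub, norm_smul,
    Real.norm_eq_abs]
  exact mul_le_mul_of_nonneg_right (hK n) (norm_nonneg _)

theorem IsPhiImage.eqOn (hx : StrictMono x) (hN : 0 < N) (hc : ∀ n, |c n| < 1) {f g : ℝ → E}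
    (hf : IsPhiImage x c r f f) (hg : IsPhiImage x c r g g)
    (hfb : ∃ M, ∀ u ∈ Icc (x 0) (x (Fin.last N)), ‖f u‖ ≤ M)
    (hgb : ∃ M, ∀ u ∈ Icc (x 0) (x (Fin.last N)), ‖g u‖ ≤ M) :
    EqOn g f (Icc (x 0) (x (Fin.last N))) := by
  obtain ⟨K, hK₁, hK⟩ := exists_lt_one_forall_abs_le hc
  obtain ⟨Mf, hMf⟩ := hfb
  obtain ⟨Mg, hMg⟩ := hgb
  intro v hv
  exact sub_eq_zero.1 (eq_zero_of_norm_le_mul_norm (h := fun u => g u - f u)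
    (fun u hu => norm_sub_le_of_le (hMg u hu) (hMf u hu)) K.2 hK₁
    (fun _ => hg.exists_norm_sub_le hx hN hK hf) hv)

theorem exists_continuousOn_eqOn_phi [CompleteSpace E] (hx : StrictMono x) (hN : 0 < N)
    (hc : ∀ n, |c n| < 1) (hr : ∀ n, ContinuousOn (r n) (Icc (x 0) (x (Fin.last N))))
    (hw : JoinUp x c r w) :
    ∃ f : ℝ → E, ContinuousOn f (Icc (x 0) (x (Fin.last N))) ∧ f (x 0) = w 0 ∧
      f (x (Fin.last N)) = w (Fin.last N) ∧
      EqOn (phi x c r f) f (Icc (x 0) (x (Fin.last N))) := by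
  obtain ⟨K, hK₁, hK⟩ := exists_lt_one_forall_abs_le hc
  have hab : x 0 ≤ x (Fin.last N) := (hx.zero_lt_last hN).le
  let X : Set C(Icc (x 0) (x (Fin.last N)), E) :=
    {g | IccExtend hab g (x 0) = w 0 ∧ IccExtend hab g (x (Fin.last N)) = w (Fin.last N)}
  have hXc : IsClosed X :=
    (isClosed_eq (continuous_eval_const _) continuous_const).inter
      (isClosed_eq (continuous_eval_const _) continuous_const)
  have : CompleteSpace X := hXc.completeSpace_coe
  have : Nonempty X := by
    let ℓ : C(Icc (x 0) (x (Fin.last N)), E) :=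
      ⟨fun q => AffineMap.lineMap (w 0) (w (Fin.last N)) ((q - x 0) / (x (Fin.last N) - x 0)),
        by fun_prop⟩
    refine ⟨ℓ, ?_, ?_⟩ <;> simp [ℓ, div_self (sub_pos.2 (hx.zero_lt_last hN)).ne']
  let T : X → X := fun g =>
    ⟨⟨(Icc (x 0) (x (Fin.last N))).domRestrict (phi x c r (IccExtend hab g)),
      (continuousOn_phi hx hN hw hr g.1.continuous.Icc_extend'.continuousOn g.2.1
        g.2.2).domRestrict⟩, by
      simp only [X, mem_ofPred_eq, IccExtend_left, IccExtend_right]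
      exact ⟨phi_apply_knot hx hN hw g.2.1 g.2.2 0,
        phi_apply_knot hx hN hw g.2.1 g.2.2 (Fin.last N)⟩⟩
  have hT : ContractingWith K T := by
    refine ⟨hK₁, LipschitzWith.of_dist_le_mul fun g g' => ?_⟩
    refine (ContinuousMap.dist_le (by positivity)).2 fun q => ?_
    obtain ⟨u, hu, hq⟩ := (isPhiImage_phi hx hN hw g.2.1 g.2.2).exists_norm_sub_le hx hN hK
      (isPhiImage_phi hx hN hw g'.2.1 g'.2.2) q.2
    calc dist ((T g).1 q) ((T g').1 q) ≤ K * ‖IccExtend hab g u - IccExtend hab g' u‖ := by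
          simpa [dist_eq_norm, T] using hq
      _ ≤ K * dist g g' := by
          rw [IccExtend_of_mem hab _ hu, IccExtend_of_mem hab _ hu, ← dist_eq_norm]
          exact mul_le_mul_of_nonneg_left (ContinuousMap.dist_apply_le_dist _) K.2
  obtain ⟨F, hF⟩ : ∃ F : X, T F = F := ⟨_, hT.fixedPoint_isFixedPt⟩
  refine ⟨IccExtend hab F, F.1.continuous.Icc_extend'.continuousOn, F.2.1, F.2.2, fun v hv => ?_⟩
  simpa [T, IccExtend_of_mem hab _ hv, domRestrict_apply] using
    congrArg (fun g : X => g.1 ⟨v, hv⟩) hF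

theorem exists_continuousOn_isPhiImage [CompleteSpace E] (hx : StrictMono x) (hN : 0 < N)
    (hc : ∀ n, |c n| < 1) (hr : ∀ n, ContinuousOn (r n) (Icc (x 0) (x (Fin.last N))))
    (hw : JoinUp x c r w) :
    ∃ f : ℝ → E, ContinuousOn f (Icc (x 0) (x (Fin.last N))) ∧ (∀ i, f (x i) = w i) ∧
      IsPhiImage x c r f f := by
  obtain ⟨f, hfc, hf₀, hf₁, hfix⟩ := exists_continuousOn_eqOn_phi hx hN hc hr hw
  have hmem : ∀ i, x i ∈ Icc (x 0) (x (Fin.last N)) := fun i =>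
    ⟨hx.monotone (Fin.zero_le i), hx.monotone (Fin.le_last i)⟩
  refine ⟨f, hfc, fun i => ?_, fun n u hu => ?_⟩
  · rw [← hfix (hmem i), phi_apply_knot hx hN hw hf₀ hf₁]
  · have hLu := LMap_mem_Icc hx hN n hu
    rw [← hfix (Icc_subset_Icc (hmem _).1 (hmem _).2 hLu),
      isPhiImage_phi hx hN hw hf₀ hf₁ n u hu]

theorem IsPhiImage.congr {g h : ℝ → E} (hgh : IsPhiImage x c r g h) {r' : Fin N → ℝ → E}
    (hr : ∀ n, EqOn (r n) (r' n) (Icc (x 0) (x (Fin.last N)))) : IsPhiImage x c r' g h :=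
  fun n u hu => by rw [hgh n u hu, hr n hu]

end Operator

theorem fixEq_iff_isPhiImage {N : ℕ} {x : Fin (N + 1) → ℝ} {α β γ : Fin N → ℝ}
    {t : Fin N → (ℝ × ℝ) × (ℝ × ℝ)} {f : ℝ → ℝ × ℝ} :
    FixEq x α β γ t f ↔
      IsPhiImage x α (fun n u => β n * (f u).2 + ((t n).1.1 * u + (t n).1.2))
          (fun u => (f u).1) (fun u => (f u).1) ∧
        IsPhiImage x γ (fun n u => (t n).2.1 * u + (t n).2.2)
          (fun u => (f u).2) (fun u => (f u).2) := by
  simp only [FixEq, IsPhiImage, Prod.ext_iff, smul_eq_mul, ← add_assoc, forall_and]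

theorem stmt0_general {N : ℕ} (hN : 1 ≤ N) (x : Fin (N + 1) → ℝ) (hx : StrictMono x)
    (α β γ : Fin N → ℝ) (hα : ∀ n, |α n| < 1) (hγ : ∀ n, |γ n| < 1)
    (y z : Fin (N + 1) → ℝ) (t : Fin N → (ℝ × ℝ) × (ℝ × ℝ))
    (hjoin0 : ∀ n : Fin N,
      α n * y 0 + β n * z 0 + ((t n).1.1 * x 0 + (t n).1.2) = y n.castSucc ∧
      γ n * z 0 + ((t n).2.1 * x 0 + (t n).2.2) = z n.castSucc)
    (hjoinN : ∀ n : Fin N,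
      α n * y (Fin.last N) + β n * z (Fin.last N) +
          ((t n).1.1 * x (Fin.last N) + (t n).1.2) = y n.succ ∧
      γ n * z (Fin.last N) + ((t n).2.1 * x (Fin.last N) + (t n).2.2) = z n.succ) :
    ∃ f : ℝ → ℝ × ℝ,
      BddOnI x f ∧ FixEq x α β γ t f ∧
      ContinuousOn f (Icc (x 0) (x (Fin.last N))) ∧
      (∀ i, f (x i) = (y i, z i)) ∧
      (∀ g : ℝ → ℝ × ℝ, BddOnI x g → FixEq x α β γ t g →
        EqOn g f (Icc (x 0) (x (Fin.last N)))) := by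
  obtain ⟨f₂, hf₂c, hf₂x, hf₂⟩ := exists_continuousOn_isPhiImage hx hN hγ
    (r := fun n u => (t n).2.1 * u + (t n).2.2) (w := z) (fun n => by fun_prop)
    fun n => ⟨(hjoin0 n).2, (hjoinN n).2⟩
  obtain ⟨f₁, hf₁c, hf₁x, hf₁⟩ := exists_continuousOn_isPhiImage hx hN hα
    (r := fun n u => β n * f₂ u + ((t n).1.1 * u + (t n).1.2)) (w := y)
    (fun n => (continuousOn_const.mul hf₂c).add (by fun_prop)) fun n => by
      simp only [smul_eq_mul, hf₂x]
      exact ⟨by linarith [(hjoin0 n).1], by linarith [(hjoinN n).1]⟩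
  have hfc : ContinuousOn (fun u => (f₁ u, f₂ u)) (Icc (x 0) (x (Fin.last N))) :=
    hf₁c.prodMk hf₂c
  refine ⟨_, isCompact_Icc.exists_bound_of_continuousOn hfc, fixEq_iff_isPhiImage.2 ⟨hf₁, hf₂⟩,
    hfc, fun i => by rw [hf₁x, hf₂x], fun g ⟨M, hM⟩ hg => ?_⟩
  rw [fixEq_iff_isPhiImage] at hg
  have h₂ : EqOn (fun u => (g u).2) f₂ (Icc (x 0) (x (Fin.last N))) :=
    hf₂.eqOn hx hN hγ hg.2 (isCompact_Icc.exists_bound_of_continuousOn hf₂c)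
      ⟨M, fun u hu => (norm_snd_le _).trans (hM u hu)⟩
  have h₁ : EqOn (fun u => (g u).1) f₁ (Icc (x 0) (x (Fin.last N))) :=
    hf₁.eqOn hx hN hα (hg.1.congr fun n u hu => by simp only [show (g u).2 = f₂ u from h₂ hu])
      (isCompact_Icc.exists_bound_of_continuousOn hf₁c)
      ⟨M, fun u hu => (norm_fst_le _).trans (hM u hu)⟩
  exact fun u hu => Prod.ext (h₁ hu) (h₂ hu)

/-- The operator `Φ_t` has a unique fixed point `f_t` in `B(I, ℝ²)`; moreover `f_t`
is continuous on `I` and satisfies `f_t (x i) = (y i, z i)` for every `i`. -/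
theorem stmt0 {N : ℕ} (hN : 1 ≤ N) (x : Fin (N + 1) → ℝ) (hx : StrictMono x)
    (α β γ : Fin N → ℝ) (hα : ∀ n, |α n| < 1) (hγ : ∀ n, |γ n| < 1)
    (hβγ : ∀ n, |β n| + |γ n| < 1)
    (y z : Fin (N + 1) → ℝ) (t : Fin N → (ℝ × ℝ) × (ℝ × ℝ))
    (hjoin0 : ∀ n : Fin N,
      α n * y 0 + β n * z 0 + ((t n).1.1 * x 0 + (t n).1.2) = y n.castSucc ∧
      γ n * z 0 + ((t n).2.1 * x 0 + (t n).2.2) = z n.castSucc)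
    (hjoinN : ∀ n : Fin N,
      α n * y (Fin.last N) + β n * z (Fin.last N) +
          ((t n).1.1 * x (Fin.last N) + (t n).1.2) = y n.succ ∧
      γ n * z (Fin.last N) + ((t n).2.1 * x (Fin.last N) + (t n).2.2) = z n.succ) :
    ∃ f : ℝ → ℝ × ℝ,
      BddOnI x f ∧ FixEq x α β γ t f ∧
      ContinuousOn f (Icc (x 0) (x (Fin.last N))) ∧
      (∀ i, f (x i) = (y i, z i)) ∧
      (∀ g : ℝ → ℝ × ℝ, BddOnI x g → FixEq x α β γ t g →
        EqOn g f (Icc (x 0) (x (Fin.last N)))) :=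
  stmt0_general hN x hx α β γ hα hγ y z t hjoin0 hjoinN
end

section
/- If the fixed point f_t is identically (0, 0) on I, then t = (0, …, 0), i.e., every p_n and q_n is the zero polynomial. Consequently the linear map Θ : T → B(I, ℝ²), Θ(t) = f_t, is injective. -/
/-! If `f` and `g` solve the fixed-point equations for `t` and `s` and agree on `I`, comparing
the two equations at the endpoints of `I` (which `L_n` sends to `x_{n-1}, x_n ∈ I`) shows that
the linear polynomials of `t n` and `s n` agree at two distinct points, hence coincide.
Since `0` solves the equation for `t = 0`, `f_t = 0` forces `t = 0`. -/

open Set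

theorem coeffs_eq_of_mul_add_eq_mul_add {a b c d u v : ℝ} (huv : u ≠ v)
    (hu : a * u + b = c * u + d) (hv : a * v + b = c * v + d) : a = c ∧ b = d := by
  have ha : a = c := by
    have h : (a - c) * (u - v) = 0 := by linear_combination hu - hv
    exact sub_eq_zero.mp ((mul_eq_zero.mp h).resolve_right (sub_ne_zero.mpr huv))
  exact ⟨ha, by subst ha; linarith⟩

section

variable {N : ℕ} {x : Fin (N + 1) → ℝ}

theorem LMap_left (hx : x (Fin.last N) ≠ x 0) (n : Fin N) : LMap x n (x 0) = x n.castSucc := by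
  have := sub_ne_zero.mpr hx
  unfold LMap; field_simp; ring

theorem LMap_right (hx : x (Fin.last N) ≠ x 0) (n : Fin N) :
    LMap x n (x (Fin.last N)) = x n.succ := by
  have := sub_ne_zero.mpr hx
  unfold LMap; field_simp; ring

theorem fixEq_zero (α β γ : Fin N → ℝ) : FixEq x α β γ 0 0 :=
  fun _ _ _ => by simp [Prod.zero_eq_mk]

variable {α β γ : Fin N → ℝ} {t s : Fin N → (ℝ × ℝ) × (ℝ × ℝ)} {f g : ℝ → ℝ × ℝ}

theorem FixEq.polys_eq_of_eqOn (hf : FixEq x α β γ t f) (hg : FixEq x α β γ s g)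
    (hfg : EqOn f g (Icc (x 0) (x (Fin.last N)))) (n : Fin N) {u : ℝ}
    (hu : u ∈ Icc (x 0) (x (Fin.last N))) (hLu : LMap x n u ∈ Icc (x 0) (x (Fin.last N))) :
    (t n).1.1 * u + (t n).1.2 = (s n).1.1 * u + (s n).1.2 ∧
      (t n).2.1 * u + (t n).2.2 = (s n).2.1 * u + (s n).2.2 := by
  have h := (hf n u hu).symm.trans ((hfg hLu).trans (hg n u hu))
  rw [hfg hu, Prod.ext_iff] at h
  exact ⟨add_left_cancel h.1, add_left_cancel h.2⟩

theorem FixEq.eq_of_eqOn (hx : StrictMono x) (hf : FixEq x α β γ t f) (hg : FixEq x α β γ s g)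
    (hfg : EqOn f g (Icc (x 0) (x (Fin.last N)))) : t = s := by
  funext n
  have hmem : ∀ k, x k ∈ Icc (x 0) (x (Fin.last N)) :=
    fun k => ⟨hx.monotone (Fin.zero_le k), hx.monotone (Fin.le_last k)⟩
  have hI : x 0 < x (Fin.last N) :=
    (hx.monotone (Fin.zero_le n.castSucc)).trans_lt (hx (Fin.castSucc_lt_last n))
  obtain ⟨hp0, hq0⟩ := hf.polys_eq_of_eqOn hg hfg n (hmem 0)
    (by rw [LMap_left hI.ne']; exact hmem _)
  obtain ⟨hpN, hqN⟩ := hf.polys_eq_of_eqOn hg hfg n (hmem (Fin.last N))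
    (by rw [LMap_right hI.ne']; exact hmem _)
  obtain ⟨hp1, hp2⟩ := coeffs_eq_of_mul_add_eq_mul_add hI.ne hp0 hpN
  obtain ⟨hq1, hq2⟩ := coeffs_eq_of_mul_add_eq_mul_add hI.ne hq0 hqN
  exact Prod.ext (Prod.ext hp1 hp2) (Prod.ext hq1 hq2)

end

theorem stmt2_general {N : ℕ} (x : Fin (N + 1) → ℝ) (hx : StrictMono x)
    (α β γ : Fin N → ℝ)
    (t : Fin N → (ℝ × ℝ) × (ℝ × ℝ)) (ft : ℝ → ℝ × ℝ)
    (hft : FixEq x α β γ t ft)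
    (hzero : ∀ u ∈ Icc (x 0) (x (Fin.last N)), ft u = 0) :
    t = 0 ∧
    (∀ (t' s' : Fin N → (ℝ × ℝ) × (ℝ × ℝ)) (ft' fs' : ℝ → ℝ × ℝ),
      BddOnI x ft' → FixEq x α β γ t' ft' →
      BddOnI x fs' → FixEq x α β γ s' fs' →
      EqOn ft' fs' (Icc (x 0) (x (Fin.last N))) → t' = s') :=
  ⟨hft.eq_of_eqOn hx (fixEq_zero α β γ) hzero,
    fun _ _ _ _ _ hft' _ hfs' hfg => hft'.eq_of_eqOn hx hfs' hfg⟩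

/-- If the fixed point `f_t` is identically `(0,0)` on `I`, then `t = 0` (every
`p_n` and `q_n` is the zero polynomial); consequently the linear map `Θ : t ↦ f_t`
is injective. -/
theorem stmt2 {N : ℕ} (hN : 1 ≤ N) (x : Fin (N + 1) → ℝ) (hx : StrictMono x)
    (α β γ : Fin N → ℝ) (hα : ∀ n, |α n| < 1) (hγ : ∀ n, |γ n| < 1)
    (hβγ : ∀ n, |β n| + |γ n| < 1)
    (t : Fin N → (ℝ × ℝ) × (ℝ × ℝ)) (ft : ℝ → ℝ × ℝ)
    (hftb : BddOnI x ft) (hft : FixEq x α β γ t ft)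
    (hzero : ∀ u ∈ Icc (x 0) (x (Fin.last N)), ft u = 0) :
    t = 0 ∧
    (∀ (t' s' : Fin N → (ℝ × ℝ) × (ℝ × ℝ)) (ft' fs' : ℝ → ℝ × ℝ),
      BddOnI x ft' → FixEq x α β γ t' ft' →
      BddOnI x fs' → FixEq x α β γ s' fs' →
      EqOn ft' fs' (Icc (x 0) (x (Fin.last N))) → t' = s') :=
  stmt2_general x hx α β γ t ft hft hzero
end

section
/- Let f = (f_1, f_2) : I → ℝ² be continuous and suppose that for each i = 1,…,N the functions p_i(f) := f_1∘L_i − α_i f_1 − β_i f_2 and q_i(f) := f_2∘L_i − γ_i f_2 are linear polynomials on I. Then t(f) := ((p_1(f), q_1(f)), …, (p_N(f), q_N(f))) belongs to T and f_{t(f)} = f; in other words, every such continuous f is in the image of the map Θ : T → B(I, ℝ²), Θ(t) = f_t. -/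
/-! Two bounded fixed points `f`, `g` of `Φ_t` coincide: the difference `Δ = g - f` satisfies
`Δ₂ ∘ L_n = γ_n Δ₂`, and once `Δ₂ = 0` also `Δ₁ ∘ L_n = α_n Δ₁`. Since the images `L_n(I)` cover
`I`, iterating gives `sup_I |Δ_i| ≤ c ^ k · sup_I |Δ_i| → 0` with `c = max_n |γ_n|`, resp.
`max_n |α_n|`. A continuous `f` whose `p_n(f)`, `q_n(f)` are linear is by construction a bounded
fixed point of `Φ_{t(f)}`, hence equals `f_{t(f)}`. -/

open Set

open Filter Topology NNReal

theorem Fin.exists_castSucc_le_le_succ {α : Type*} [LinearOrder α] {N : ℕ} (hN : N ≠ 0)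
    (x : Fin (N + 1) → α) {v : α} (hv₀ : x 0 ≤ v) (hv₁ : v ≤ x (Fin.last N)) :
    ∃ n : Fin N, x n.castSucc ≤ v ∧ v ≤ x n.succ := by
  obtain ⟨M, rfl⟩ := Nat.exists_eq_succ_of_ne_zero hN
  by_contra! hcon
  have hle : ∀ k, x k ≤ v := by
    intro k
    induction k using Fin.induction with
    | zero => exact hv₀
    | succ i ih => exact (hcon i ih).le
  have := hcon (Fin.last M) (hle _)
  rw [Fin.succ_last] at this
  exact this.not_ge hv₁

theorem exists_lt_one_forall_norm_le {ι E : Type*} [Fintype ι] [SeminormedAddCommGroup E]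
    {a : ι → E} (h : ∀ i, ‖a i‖ < 1) : ∃ c : ℝ≥0, c < 1 ∧ ∀ i, ‖a i‖ ≤ c :=
  ⟨Finset.univ.sup fun i => ‖a i‖₊,
    (Finset.sup_lt_iff zero_lt_one).2 fun i _ => h i,
    fun i => Finset.le_sup (f := fun i => ‖a i‖₊) (Finset.mem_univ i)⟩

theorem eqOn_zero_of_norm_comp_le {ι α E : Type*} [NormedAddCommGroup E] {S : Set α}
    {φ : ι → α → α} (hS : S ⊆ ⋃ i, φ i '' S) {Δ : α → E} {M : ℝ}
    (hM : ∀ u ∈ S, ‖Δ u‖ ≤ M) {c : ℝ≥0} (hc : c < 1)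
    (hΔ : ∀ i, ∀ u ∈ S, ‖Δ (φ i u)‖ ≤ c * ‖Δ u‖) : EqOn Δ 0 S := by
  have hpow : ∀ k : ℕ, ∀ v ∈ S, ‖Δ v‖ ≤ c ^ k * M := by
    intro k
    induction k with
    | zero => simpa using hM
    | succ k ih =>
      intro v hv
      obtain ⟨i, u, hu, rfl⟩ : ∃ i, ∃ u ∈ S, φ i u = v := by simpa using hS hv
      calc ‖Δ (φ i u)‖ ≤ c * ‖Δ u‖ := hΔ i u hu
        _ ≤ c * (c ^ k * M) := by gcongr; exact ih u hu
        _ = c ^ (k + 1) * M := by ring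
  intro v hv
  have hlim : Tendsto (fun k : ℕ => (c : ℝ) ^ k * M) atTop (𝓝 0) := by
    simpa using (tendsto_pow_atTop_nhds_zero_of_lt_one c.2 hc).mul_const M
  exact norm_le_zero_iff.1 (ge_of_tendsto hlim (Eventually.of_forall fun k => hpow k v hv))

section LMap

variable {N : ℕ} {x : Fin (N + 1) → ℝ}

theorem continuous_LMap (n : Fin N) : Continuous (LMap x n) := by
  unfold LMap; fun_prop

theorem LMap_apply_zero (h : x 0 ≠ x (Fin.last N)) (n : Fin N) :
    LMap x n (x 0) = x n.castSucc := by
  have := sub_ne_zero.2 h.symm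
  unfold LMap; field_simp; ring

theorem LMap_apply_last (h : x 0 ≠ x (Fin.last N)) (n : Fin N) :
    LMap x n (x (Fin.last N)) = x n.succ := by
  have := sub_ne_zero.2 h.symm
  unfold LMap; field_simp; ring

theorem Icc_subset_iUnion_image_LMap (hN : 1 ≤ N) (hx : StrictMono x) :
    Icc (x 0) (x (Fin.last N)) ⊆ ⋃ n, LMap x n '' Icc (x 0) (x (Fin.last N)) := by
  intro v ⟨hv₀, hv₁⟩
  have hI : x 0 < x (Fin.last N) := hx (Fin.lt_def.2 (by simp; omega))
  obtain ⟨n, hn⟩ := Fin.exists_castSucc_le_le_succ (by omega) x hv₀ hv₁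
  have hIVT := intermediate_value_Icc hI.le (continuous_LMap (x := x) n).continuousOn
  rw [LMap_apply_zero hI.ne, LMap_apply_last hI.ne] at hIVT
  exact mem_iUnion.2 ⟨n, hIVT hn⟩

end LMap

theorem BddOnI.of_continuousOn {N : ℕ} {x : Fin (N + 1) → ℝ} {f : ℝ → ℝ × ℝ}
    (hf : ContinuousOn f (Icc (x 0) (x (Fin.last N)))) : BddOnI x f :=
  isCompact_Icc.exists_bound_of_continuousOn hf

theorem BddOnI.sub {N : ℕ} {x : Fin (N + 1) → ℝ} {f g : ℝ → ℝ × ℝ} (hf : BddOnI x f)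
    (hg : BddOnI x g) : BddOnI x (f - g) := by
  obtain ⟨Mf, hMf⟩ := hf
  obtain ⟨Mg, hMg⟩ := hg
  exact ⟨Mf + Mg, fun u hu => (norm_sub_le _ _).trans (add_le_add (hMf u hu) (hMg u hu))⟩

theorem FixEq.eqOn {N : ℕ} (hN : 1 ≤ N) {x : Fin (N + 1) → ℝ} (hx : StrictMono x)
    {α β γ : Fin N → ℝ} (hα : ∀ n, |α n| < 1) (hγ : ∀ n, |γ n| < 1)
    {t : Fin N → (ℝ × ℝ) × (ℝ × ℝ)} {f g : ℝ → ℝ × ℝ} (hf : BddOnI x f) (hg : BddOnI x g)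
    (hfixf : FixEq x α β γ t f) (hfixg : FixEq x α β γ t g) :
    EqOn g f (Icc (x 0) (x (Fin.last N))) := by
  have hcover := Icc_subset_iUnion_image_LMap hN hx
  obtain ⟨M, hM⟩ := hg.sub hf
  have hΔ : ∀ n, ∀ u ∈ Icc (x 0) (x (Fin.last N)),
      (g - f) (LMap x n u) =
        (α n * ((g - f) u).1 + β n * ((g - f) u).2, γ n * ((g - f) u).2) := by
    intro n u hu
    simp only [Pi.sub_apply, hfixg n u hu, hfixf n u hu, Prod.mk_sub_mk, Prod.fst_sub, Prod.snd_sub]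
    ext <;> ring
  obtain ⟨cγ, hcγ, hγc⟩ :=
    exists_lt_one_forall_norm_le fun n => (Real.norm_eq_abs _).trans_lt (hγ n)
  have h₂ : EqOn (fun u => ((g - f) u).2) 0 (Icc (x 0) (x (Fin.last N))) := by
    refine eqOn_zero_of_norm_comp_le hcover (fun u hu => (norm_snd_le _).trans (hM u hu)) hcγ ?_
    intro n u hu
    simp only [hΔ n u hu, norm_mul]
    gcongr
    exact hγc n
  obtain ⟨cα, hcα, hαc⟩ :=
    exists_lt_one_forall_norm_le fun n => (Real.norm_eq_abs _).trans_lt (hα n)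
  have h₁ : EqOn (fun u => ((g - f) u).1) 0 (Icc (x 0) (x (Fin.last N))) := by
    refine eqOn_zero_of_norm_comp_le hcover (fun u hu => (norm_fst_le _).trans (hM u hu)) hcα ?_
    intro n u hu
    simp only [hΔ n u hu, h₂ hu, Pi.zero_apply, mul_zero, add_zero, norm_mul]
    gcongr
    exact hαc n
  intro u hu
  exact sub_eq_zero.1 (Prod.ext (h₁ hu) (h₂ hu))

theorem stmt3_general {N : ℕ} (hN : 1 ≤ N) (x : Fin (N + 1) → ℝ) (hx : StrictMono x)
    (α β γ : Fin N → ℝ) (hα : ∀ n, |α n| < 1) (hγ : ∀ n, |γ n| < 1)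
    (f₁ f₂ : ℝ → ℝ)
    (hc₁ : ContinuousOn f₁ (Icc (x 0) (x (Fin.last N))))
    (hc₂ : ContinuousOn f₂ (Icc (x 0) (x (Fin.last N))))
    (hp : ∀ n : Fin N, ∃ c d : ℝ, ∀ u ∈ Icc (x 0) (x (Fin.last N)),
      f₁ (LMap x n u) - α n * f₁ u - β n * f₂ u = c * u + d)
    (hq : ∀ n : Fin N, ∃ e h : ℝ, ∀ u ∈ Icc (x 0) (x (Fin.last N)),
      f₂ (LMap x n u) - γ n * f₂ u = e * u + h) :
    ∃ t : Fin N → (ℝ × ℝ) × (ℝ × ℝ),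
      FixEq x α β γ t (fun u => (f₁ u, f₂ u)) ∧
      (∀ g : ℝ → ℝ × ℝ, BddOnI x g → FixEq x α β γ t g →
        EqOn g (fun u => (f₁ u, f₂ u)) (Icc (x 0) (x (Fin.last N)))) := by
  choose c d hcd using hp
  choose e h heh using hq
  have hfix : FixEq x α β γ (fun n => ((c n, d n), (e n, h n))) (fun u => (f₁ u, f₂ u)) :=
    fun n u hu => Prod.ext (by linarith [hcd n u hu]) (by linarith [heh n u hu])
  exact ⟨_, hfix, fun g hg hgf =>
    hfix.eqOn hN hx hα hγ (.of_continuousOn (hc₁.prodMk hc₂)) hg hgf⟩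

/-- Let `f = (f₁, f₂)` be continuous on `I` and suppose that for each `n` the
functions `p_n(f) = f₁ ∘ L_n − α_n f₁ − β_n f₂` and `q_n(f) = f₂ ∘ L_n − γ_n f₂`
are linear polynomials on `I`.  Then `t(f) ∈ T` and `f_{t(f)} = f`; in particular
`f` is in the image of `Θ : t ↦ f_t`. -/
theorem stmt3 {N : ℕ} (hN : 1 ≤ N) (x : Fin (N + 1) → ℝ) (hx : StrictMono x)
    (α β γ : Fin N → ℝ) (hα : ∀ n, |α n| < 1) (hγ : ∀ n, |γ n| < 1)
    (hβγ : ∀ n, |β n| + |γ n| < 1)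
    (f₁ f₂ : ℝ → ℝ)
    (hc₁ : ContinuousOn f₁ (Icc (x 0) (x (Fin.last N))))
    (hc₂ : ContinuousOn f₂ (Icc (x 0) (x (Fin.last N))))
    (hp : ∀ n : Fin N, ∃ c d : ℝ, ∀ u ∈ Icc (x 0) (x (Fin.last N)),
      f₁ (LMap x n u) - α n * f₁ u - β n * f₂ u = c * u + d)
    (hq : ∀ n : Fin N, ∃ e h : ℝ, ∀ u ∈ Icc (x 0) (x (Fin.last N)),
      f₂ (LMap x n u) - γ n * f₂ u = e * u + h) :
    ∃ t : Fin N → (ℝ × ℝ) × (ℝ × ℝ),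
      FixEq x α β γ t (fun u => (f₁ u, f₂ u)) ∧
      (∀ g : ℝ → ℝ × ℝ, BddOnI x g → FixEq x α β γ t g →
        EqOn g (fun u => (f₁ u, f₂ u)) (Icc (x 0) (x (Fin.last N)))) :=
  stmt3_general hN x hx α β γ hα hγ f₁ f₂ hc₁ hc₂ hp hq
end

section
/- Assume β_n ≠ 0 for every n = 1,…,N. Then the space of CHFIFs S_0^1 is a vector space of dimension 2N. -/
open Set

/-- The space `S₀` of pairs `f = (f₁, f₂)` where `f₁` is a CHFIF and `f₂` an AFIF
for some interpolation data over the fixed partition and parameters; members are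
extended by `0` outside `I = [x 0, x N]`. -/
def S0set {N : ℕ} (x : Fin (N + 1) → ℝ) (α β γ : Fin N → ℝ) : Set (ℝ → ℝ × ℝ) :=
  {f | ContinuousOn f (Icc (x 0) (x (Fin.last N))) ∧
       (∀ u ∉ Icc (x 0) (x (Fin.last N)), f u = 0) ∧
       ∃ t : Fin N → (ℝ × ℝ) × (ℝ × ℝ), FixEq x α β γ t f}

/-- The space `S₀¹` of CHFIFs: first components of members of `S₀`. -/
def S01set {N : ℕ} (x : Fin (N + 1) → ℝ) (α β γ : Fin N → ℝ) : Set (ℝ → ℝ) :=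
  {g | ∃ f ∈ S0set x α β γ, g = fun u => (f u).1}

/-!
Evaluation at the nodes identifies `S₀` with `(ℝ × ℝ) ^ (N + 1)`. The fixed-point system is
triangular (the second component does not see the first), so existence and uniqueness reduce to
scalar fractal interpolation: existence from the contraction `f ↦ (c_n f + R_n) ∘ L_n⁻¹` on the
`n`-th subinterval, uniqueness because a bounded `g` with `g ∘ L_n = c_n g` satisfies
`sup |g| ≤ max |c_n| · sup |g|`. Taking first components maps `S₀` onto `S₀¹`, and its kernel
consists of the pairs `(0, affine)`: if `f₁ = 0` then `β_n f₂ + p_n = 0` with `β_n ≠ 0`.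
Hence `dim S₀¹ = 2 (N + 1) - 2 = 2 N`.
-/

lemma exists_abs_le_lt_one {ι : Type*} [Fintype ι] {c : ι → ℝ} (hc : ∀ i, |c i| < 1) :
    ∃ r : NNReal, r < 1 ∧ ∀ i, |c i| ≤ r :=
  ⟨Finset.univ.sup fun i => ‖c i‖₊,
    (Finset.sup_lt_iff one_pos).2 fun i _ => by simpa [← NNReal.coe_lt_coe] using hc i,
    fun i => by
      simpa using NNReal.coe_le_coe.2 (Finset.le_sup (f := fun i => ‖c i‖₊) (Finset.mem_univ i))⟩

lemma eq_zero_of_affine_eq_zero {a b s k : ℝ} (hab : a ≠ b) (ha : s * a + k = 0)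
    (hb : s * b + k = 0) : s = 0 ∧ k = 0 := by
  have hs : s = 0 :=
    (mul_eq_zero.1 (by linarith : s * (a - b) = 0)).resolve_right (sub_ne_zero.2 hab)
  exact ⟨hs, by simpa [hs] using ha⟩

section LinearAlgebra

open Module

lemma finrank_map_add_finrank_inf_ker {K V V₂ : Type*} [DivisionRing K] [AddCommGroup V]
    [Module K V] [AddCommGroup V₂] [Module K V₂] (W : Submodule K V) [FiniteDimensional K W]
    (f : V →ₗ[K] V₂) :
    finrank K (W.map f) + finrank K ↥(W ⊓ LinearMap.ker f) = finrank K W := by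
  rw [← LinearMap.range_domRestrict, ← Submodule.map_comap_subtype,
    Submodule.finrank_map_subtype_eq, ← LinearMap.ker_domRestrict]
  exact (f.domRestrict W).finrank_range_add_finrank_ker

lemma exists_linearIndependent_span_eq_of_finrank_eq {K V : Type*} [DivisionRing K]
    [AddCommGroup V] [Module K V] {W : Submodule K V} [FiniteDimensional K W] {n : ℕ}
    (h : finrank K W = n) :
    ∃ b : Fin n → V, (∀ j, b j ∈ W) ∧ LinearIndependent K b ∧
      ∀ v ∈ W, v ∈ Submodule.span K (range b) := by
  let B := Module.finBasisOfFinrankEq K W h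
  refine ⟨W.subtype ∘ B, fun j => (B j).2, B.linearIndependent.map' _ W.ker_subtype,
    fun v hv => ?_⟩
  rw [range_comp, Submodule.span_image, B.span_eq, Submodule.map_subtype_top]
  exact hv

end LinearAlgebra

namespace FractalInterpolation

open Filter Topology Module

variable {N : ℕ} {x : Fin (N + 1) → ℝ}

local notation "𝕀" => Icc (x 0) (x (Fin.last N))

local notation "π₁" => LinearMap.compLeft (LinearMap.fst ℝ ℝ ℝ) ℝ

section Partition

lemma x_zero_lt_x_last (hx : StrictMono x) (hN : 0 < N) : x 0 < x (Fin.last N) :=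
  hx (by simpa [Fin.lt_def] using hN)

lemma node_mem (hx : StrictMono x) (i : Fin (N + 1)) : x i ∈ 𝕀 :=
  ⟨hx.monotone (Fin.zero_le i), hx.monotone (Fin.le_last i)⟩

lemma exists_mem_piece (hx : StrictMono x) (hN : 0 < N) {v : ℝ} (hv : v ∈ 𝕀) :
    ∃ n : Fin N, v ∈ Icc (x n.castSucc) (x n.succ) := by
  suffices h : ∀ i : Fin (N + 1), v ≤ x i →
      v = x 0 ∨ ∃ n : Fin N, v ∈ Icc (x n.castSucc) (x n.succ) by
    rcases h _ hv.2 with rfl | h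
    · exact ⟨⟨0, hN⟩, le_rfl, hx.monotone (Fin.zero_le _)⟩
    · exact h
  intro i
  induction i using Fin.induction with
  | zero => exact fun h => Or.inl (le_antisymm h hv.1)
  | succ i ih =>
    intro h
    rcases le_or_gt v (x i.castSucc) with hi | hi
    · exact ih hi
    · exact Or.inr ⟨i, hi.le, h⟩

lemma succ_eq_castSucc_of_mem_piece (hx : StrictMono x) {m n : Fin N} (hmn : m < n) {v : ℝ}
    (hm : v ∈ Icc (x m.castSucc) (x m.succ)) (hn : v ∈ Icc (x n.castSucc) (x n.succ)) :
    m.succ = n.castSucc ∧ v = x m.succ := by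
  have hle : x m.succ ≤ x n.castSucc := hx.monotone (Fin.succ_le_castSucc_iff.2 hmn)
  have hv : v = x m.succ := le_antisymm hm.2 (hle.trans hn.1)
  exact ⟨hx.injective (le_antisymm hle (hv ▸ hn.1)), hv⟩

lemma LMap_slope_pos (hx : StrictMono x) (n : Fin N) :
    0 < (x n.succ - x n.castSucc) / (x (Fin.last N) - x 0) :=
  div_pos (sub_pos.2 (hx n.castSucc_lt_succ)) (sub_pos.2 (x_zero_lt_x_last hx n.pos))

lemma LMap_zero (hx : StrictMono x) (n : Fin N) : LMap x n (x 0) = x n.castSucc := by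
  have := (x_zero_lt_x_last hx n.pos).ne'
  unfold LMap; field_simp; ring

lemma LMap_last (hx : StrictMono x) (n : Fin N) : LMap x n (x (Fin.last N)) = x n.succ := by
  have := (x_zero_lt_x_last hx n.pos).ne'
  unfold LMap; field_simp; ring

lemma LMap_eq_affine (n : Fin N) (u : ℝ) :
    LMap x n u = (LMap x n 1 - LMap x n 0) * u + LMap x n 0 := by
  simp only [LMap]; ring

lemma image_LMap (hx : StrictMono x) (n : Fin N) :
    LMap x n '' 𝕀 = Icc (x n.castSucc) (x n.succ) := by
  rw [← LMap_zero hx n, ← LMap_last hx n]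
  exact image_affine_Icc' (LMap_slope_pos hx n) _ _ _

lemma LMap_mem (hx : StrictMono x) (n : Fin N) {u : ℝ} (hu : u ∈ 𝕀) : LMap x n u ∈ 𝕀 :=
  Icc_subset_Icc (node_mem hx _).1 (node_mem hx _).2 (image_LMap hx n ▸ mem_image_of_mem _ hu)

noncomputable def lineCoeffs (x : Fin (N + 1) → ℝ) (A B : ℝ) : ℝ × ℝ :=
  ((B - A) / (x (Fin.last N) - x 0), A - (B - A) / (x (Fin.last N) - x 0) * x 0)

lemma lineCoeffs_zero (A B : ℝ) : (lineCoeffs x A B).1 * x 0 + (lineCoeffs x A B).2 = A := by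
  simp only [lineCoeffs]; ring

lemma lineCoeffs_last (hx : StrictMono x) (hN : 0 < N) (A B : ℝ) :
    (lineCoeffs x A B).1 * x (Fin.last N) + (lineCoeffs x A B).2 = B := by
  have := (x_zero_lt_x_last hx hN).ne'
  simp only [lineCoeffs]; field_simp; ring

noncomputable def LMapInv (x : Fin (N + 1) → ℝ) (n : Fin N) (v : ℝ) : ℝ :=
  x 0 + (v - x n.castSucc) * ((x (Fin.last N) - x 0) / (x n.succ - x n.castSucc))

lemma LMapInv_LMap (hx : StrictMono x) (n : Fin N) (u : ℝ) : LMapInv x n (LMap x n u) = u := by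
  have := (x_zero_lt_x_last hx n.pos).ne'
  have := (sub_pos.2 (hx n.castSucc_lt_succ)).ne'
  unfold LMap LMapInv; field_simp; ring

lemma continuous_LMapInv (n : Fin N) : Continuous (LMapInv x n) := by
  unfold LMapInv; fun_prop

end Partition

section Glue

open scoped Classical in
noncomputable def glue (x : Fin (N + 1) → ℝ) (P : Fin N → ℝ → ℝ) (v : ℝ) : ℝ :=
  if h : ∃ n : Fin N, v ∈ Icc (x n.castSucc) (x n.succ) then P h.choose v else 0

variable {P : Fin N → ℝ → ℝ} {w : Fin (N + 1) → ℝ}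

lemma eq_of_mem_piece_of_mem_piece (hx : StrictMono x)
    (hP : ∀ n, P n (x n.castSucc) = w n.castSucc ∧ P n (x n.succ) = w n.succ)
    {m n : Fin N} {v : ℝ} (hm : v ∈ Icc (x m.castSucc) (x m.succ))
    (hn : v ∈ Icc (x n.castSucc) (x n.succ)) : P m v = P n v := by
  rcases lt_trichotomy m n with hlt | rfl | hgt
  · obtain ⟨hmn, rfl⟩ := succ_eq_castSucc_of_mem_piece hx hlt hm hn
    rw [(hP m).2, hmn, (hP n).1]
  · rfl
  · obtain ⟨hnm, rfl⟩ := succ_eq_castSucc_of_mem_piece hx hgt hn hm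
    rw [(hP n).2, hnm, (hP m).1]

lemma glue_eq (hx : StrictMono x)
    (hP : ∀ n, P n (x n.castSucc) = w n.castSucc ∧ P n (x n.succ) = w n.succ)
    {n : Fin N} {v : ℝ} (hv : v ∈ Icc (x n.castSucc) (x n.succ)) : glue x P v = P n v := by
  have h : ∃ m : Fin N, v ∈ Icc (x m.castSucc) (x m.succ) := ⟨n, hv⟩
  rw [glue, dif_pos h]
  exact eq_of_mem_piece_of_mem_piece hx hP h.choose_spec hv

lemma glue_node (hx : StrictMono x) (hN : 0 < N)
    (hP : ∀ n, P n (x n.castSucc) = w n.castSucc ∧ P n (x n.succ) = w n.succ)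
    (i : Fin (N + 1)) : glue x P (x i) = w i := by
  induction i using Fin.cases with
  | zero =>
    exact (glue_eq hx hP (n := ⟨0, hN⟩) ⟨le_rfl, hx.monotone (Fin.zero_le _)⟩).trans (hP _).1
  | succ n =>
    exact (glue_eq hx hP ⟨(hx n.castSucc_lt_succ).le, le_rfl⟩).trans (hP n).2

lemma continuousOn_glue (hx : StrictMono x) (hN : 0 < N)
    (hP : ∀ n, P n (x n.castSucc) = w n.castSucc ∧ P n (x n.succ) = w n.succ)
    (hcont : ∀ n, Continuous (P n)) : ContinuousOn (glue x P) 𝕀 := by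
  refine (LocallyFinite.continuousOn_iUnion (locallyFinite_of_finite _) (fun _ => isClosed_Icc)
    fun n => (hcont n).continuousOn.congr fun v hv => glue_eq hx hP hv).mono fun v hv => ?_
  exact mem_iUnion.2 (exists_mem_piece hx hN hv)

lemma abs_glue_sub_glue_le {Q : Fin N → ℝ → ℝ} {C : ℝ} (hC : 0 ≤ C)
    (hPQ : ∀ n v, |P n v - Q n v| ≤ C) (v : ℝ) : |glue x P v - glue x Q v| ≤ C := by
  unfold glue
  split_ifs
  · exact hPQ _ _
  · simpa using hC

end Glue

lemma eqOn_zero_of_LMap_eq_mul (hx : StrictMono x) (hN : 0 < N) {c : Fin N → ℝ}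
    (hc : ∀ n, |c n| < 1) {g : ℝ → ℝ} (hbdd : ∃ M, ∀ u ∈ 𝕀, |g u| ≤ M)
    (hg : ∀ n, ∀ u ∈ 𝕀, g (LMap x n u) = c n * g u) : EqOn g 0 𝕀 := by
  obtain ⟨r, hr1, hr⟩ := exists_abs_le_lt_one hc
  obtain ⟨M, hM⟩ := hbdd
  have hbound : ∀ k : ℕ, ∀ v ∈ 𝕀, |g v| ≤ r ^ k * M := by
    intro k
    induction k with
    | zero => simpa using hM
    | succ k ih =>
      intro v hv
      obtain ⟨n, hn⟩ := exists_mem_piece hx hN hv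
      obtain ⟨u, hu, rfl⟩ := (image_LMap hx n).symm ▸ hn
      rw [hg n u hu, abs_mul, pow_succ', mul_assoc]
      exact mul_le_mul (hr n) (ih u hu) (abs_nonneg _) r.2
  intro v hv
  have hlim : Tendsto (fun k => (r : ℝ) ^ k * M) atTop (𝓝 0) := by
    simpa using (tendsto_pow_atTop_nhds_zero_of_lt_one r.2 hr1).mul_const M
  exact abs_nonpos_iff.1 (ge_of_tendsto' hlim fun k => hbound k v hv)

section Existence

variable {c : Fin N → ℝ} {R : Fin N → ℝ → ℝ} {v : Fin (N + 1) → ℝ} {f : ℝ → ℝ}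

noncomputable def fifPiece (x : Fin (N + 1) → ℝ) (c : Fin N → ℝ) (R : Fin N → ℝ → ℝ)
    (f : ℝ → ℝ) (n : Fin N) (w : ℝ) : ℝ :=
  c n * f (LMapInv x n w) + R n (LMapInv x n w)

lemma continuous_fifPiece (hR : ∀ n, Continuous (R n)) (hf : Continuous f) (n : Fin N) :
    Continuous (fifPiece x c R f n) :=
  (continuous_const.mul (hf.comp (continuous_LMapInv n))).add
    ((hR n).comp (continuous_LMapInv n))

lemma fifPiece_LMap (hx : StrictMono x) (n : Fin N) (u : ℝ) :
    fifPiece x c R f n (LMap x n u) = c n * f u + R n u := by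
  simp only [fifPiece, LMapInv_LMap hx]

lemma fifPiece_nodes (hx : StrictMono x)
    (hjoin : ∀ n, c n * v 0 + R n (x 0) = v n.castSucc ∧
      c n * v (Fin.last N) + R n (x (Fin.last N)) = v n.succ)
    (hf0 : f (x 0) = v 0) (hfN : f (x (Fin.last N)) = v (Fin.last N)) (n : Fin N) :
    fifPiece x c R f n (x n.castSucc) = v n.castSucc ∧
      fifPiece x c R f n (x n.succ) = v n.succ := by
  rw [← LMap_zero hx n, ← LMap_last hx n, fifPiece_LMap hx, fifPiece_LMap hx, hf0, hfN]
  exact hjoin n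

lemma abs_glue_fifPiece_sub_le {g : ℝ → ℝ} {r C : ℝ} (hr0 : 0 ≤ r) (hr : ∀ n, |c n| ≤ r)
    (hC : ∀ u, |f u - g u| ≤ C) (w : ℝ) :
    |glue x (fifPiece x c R f) w - glue x (fifPiece x c R g) w| ≤ r * C := by
  refine abs_glue_sub_glue_le (mul_nonneg hr0 ((abs_nonneg _).trans (hC 0))) (fun n w => ?_) w
  rw [fifPiece, fifPiece, add_sub_add_right_eq_sub, ← mul_sub, abs_mul]
  exact mul_le_mul (hr n) (hC _) (abs_nonneg _) hr0

theorem exists_continuous_fif (hx : StrictMono x) (hN : 0 < N) (hc : ∀ n, |c n| < 1)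
    (hR : ∀ n, Continuous (R n))
    (hjoin : ∀ n, c n * v 0 + R n (x 0) = v n.castSucc ∧
      c n * v (Fin.last N) + R n (x (Fin.last N)) = v n.succ) :
    ∃ f : ℝ → ℝ, Continuous f ∧ (∀ i, f (x i) = v i) ∧
      ∀ n, ∀ u ∈ 𝕀, f (LMap x n u) = c n * f u + R n u := by
  obtain ⟨r, hr1, hr⟩ := exists_abs_le_lt_one hc
  let S : Set C(𝕀, ℝ) :=
    {φ | φ ⟨x 0, node_mem hx 0⟩ = v 0 ∧ φ ⟨x (Fin.last N), node_mem hx _⟩ = v (Fin.last N)}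
  have : CompleteSpace S :=
    ((isClosed_eq (continuous_eval_const _) continuous_const).inter
      (isClosed_eq (continuous_eval_const _) continuous_const)).completeSpace_coe
  have : Nonempty S := by
    let ℓ := lineCoeffs x (v 0) (v (Fin.last N))
    exact ⟨⟨⟨fun u : 𝕀 => ℓ.1 * u + ℓ.2, by fun_prop⟩,
      lineCoeffs_zero _ _, lineCoeffs_last hx hN _ _⟩⟩
  let ext (φ : C(𝕀, ℝ)) : C(ℝ, ℝ) := φ.IccExtend (x_zero_lt_x_last hx hN).le
  have ext_apply (φ : C(𝕀, ℝ)) {u : ℝ} (hu : u ∈ 𝕀) : ext φ u = φ ⟨u, hu⟩ :=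
    IccExtend_of_mem _ _ hu
  have hpiece (φ : S) := fifPiece_nodes (R := R) hx hjoin
    ((ext_apply φ (node_mem hx 0)).trans φ.2.1) ((ext_apply φ (node_mem hx _)).trans φ.2.2)
  have hT_node (φ : S) (i : Fin (N + 1)) : glue x (fifPiece x c R (ext φ)) (x i) = v i :=
    glue_node hx hN (hpiece φ) i
  -- The prescribed end values make adjacent pieces agree at the nodes, so `T φ` is continuous.
  let T (φ : S) : S :=
    ⟨⟨Set.domRestrict 𝕀 (glue x (fifPiece x c R (ext φ))),
      (continuousOn_glue hx hN (hpiece φ)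
        (continuous_fifPiece hR (ext φ).continuous)).domRestrict⟩,
      hT_node φ 0, hT_node φ _⟩
  have hT : ContractingWith r T := by
    refine ⟨hr1, LipschitzWith.of_dist_le_mul fun φ ψ =>
      (ContinuousMap.dist_le (by positivity)).2 fun u => ?_⟩
    rw [Real.dist_eq]
    refine abs_glue_fifPiece_sub_le (f := ext φ) (g := ext ψ) r.2 hr (fun w => ?_) u
    rw [← Real.dist_eq]
    exact ContinuousMap.dist_apply_le_dist (f := (φ : C(𝕀, ℝ))) (g := ψ) _
  obtain ⟨φ, hφ⟩ : ∃ φ, T φ = φ := ⟨_, hT.fixedPoint_isFixedPt⟩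
  have hφ_apply {u : ℝ} (hu : u ∈ 𝕀) : ext φ u = glue x (fifPiece x c R (ext φ)) u := by
    rw [ext_apply _ hu]
    exact (congrArg (fun ψ : S => (ψ : C(𝕀, ℝ)) ⟨u, hu⟩) hφ).symm
  refine ⟨ext φ, (ext φ).continuous, fun i => (hφ_apply (node_mem hx i)).trans (hT_node φ i),
    fun n u hu => ?_⟩
  rw [hφ_apply (LMap_mem hx n hu), glue_eq hx (hpiece φ) (image_LMap hx n ▸ mem_image_of_mem _ hu),
    fifPiece_LMap hx]

end Existence

section S0

variable {α β γ : Fin N → ℝ} {t s : Fin N → (ℝ × ℝ) × (ℝ × ℝ)} {f g : ℝ → ℝ × ℝ}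

lemma FixEq.zero : FixEq x α β γ 0 0 := fun n u _ => by simp [Prod.ext_iff]

lemma FixEq.add (hf : FixEq x α β γ t f) (hg : FixEq x α β γ s g) :
    FixEq x α β γ (t + s) (f + g) := fun n u hu => by
  simp only [Pi.add_apply, hf n u hu, hg n u hu, Prod.mk_add_mk, Prod.fst_add, Prod.snd_add]
  exact Prod.ext (by ring) (by ring)

lemma FixEq.smul (a : ℝ) (hf : FixEq x α β γ t f) :
    FixEq x α β γ (a • t) (a • f) := fun n u hu => by
  simp only [Pi.smul_apply, hf n u hu, Prod.smul_mk, Prod.smul_fst, Prod.smul_snd, smul_eq_mul]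
  exact Prod.ext (by ring) (by ring)

variable (x α β γ) in
def S0 : Submodule ℝ (ℝ → ℝ × ℝ) where
  carrier := S0set x α β γ
  zero_mem' := ⟨continuousOn_const, fun _ _ => rfl, 0, FixEq.zero⟩
  add_mem' := by
    rintro f g ⟨hf, hf0, t, ht⟩ ⟨hg, hg0, s, hs⟩
    exact ⟨hf.add hg, fun u hu => by simp [hf0 u hu, hg0 u hu], t + s, FixEq.add ht hs⟩
  smul_mem' := by
    rintro a f ⟨hf, hf0, t, ht⟩
    exact ⟨hf.const_smul a, fun u hu => by simp [hf0 u hu], a • t, FixEq.smul a ht⟩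

lemma S01set_eq_map : S01set x α β γ = (S0 x α β γ).map π₁ := by
  ext g
  simp only [S01set, mem_ofPred_eq, SetLike.mem_coe, Submodule.mem_map]
  exact ⟨fun ⟨f, hf, h⟩ => ⟨f, hf, h.symm⟩, fun ⟨f, hf, h⟩ => ⟨f, hf, h.symm⟩⟩

lemma FixEq.apply_castSucc (hx : StrictMono x) (h : FixEq x α β γ t f) (n : Fin N) :
    f (x n.castSucc) = (α n * (f (x 0)).1 + β n * (f (x 0)).2 + ((t n).1.1 * x 0 + (t n).1.2),
      γ n * (f (x 0)).2 + ((t n).2.1 * x 0 + (t n).2.2)) := by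
  rw [← LMap_zero hx n]; exact h n _ (node_mem hx 0)

lemma FixEq.apply_succ (hx : StrictMono x) (h : FixEq x α β γ t f) (n : Fin N) :
    f (x n.succ) = (α n * (f (x (Fin.last N))).1 + β n * (f (x (Fin.last N))).2 +
        ((t n).1.1 * x (Fin.last N) + (t n).1.2),
      γ n * (f (x (Fin.last N))).2 + ((t n).2.1 * x (Fin.last N) + (t n).2.2)) := by
  rw [← LMap_last hx n]; exact h n _ (node_mem hx _)

lemma eq_zero_of_mem_S0set_of_nodes (hx : StrictMono x) (hN : 0 < N) (hα : ∀ n, |α n| < 1)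
    (hγ : ∀ n, |γ n| < 1) (hf : f ∈ S0set x α β γ) (hnodes : ∀ i, f (x i) = 0) : f = 0 := by
  obtain ⟨hcont, hout, t, hfix⟩ := hf
  have ht : ∀ n, t n = 0 := by
    intro n
    have h0 := FixEq.apply_castSucc hx hfix n
    have h1 := FixEq.apply_succ hx hfix n
    simp only [hnodes, Prod.fst_zero, Prod.snd_zero, mul_zero, zero_add, Prod.ext_iff] at h0 h1
    have hne := (x_zero_lt_x_last hx hN).ne
    obtain ⟨hp₁, hp₂⟩ := eq_zero_of_affine_eq_zero hne h0.1.symm h1.1.symm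
    obtain ⟨hq₁, hq₂⟩ := eq_zero_of_affine_eq_zero hne h0.2.symm h1.2.symm
    exact Prod.ext (Prod.ext hp₁ hp₂) (Prod.ext hq₁ hq₂)
  obtain ⟨M, hM⟩ := isCompact_Icc.exists_bound_of_continuousOn hcont
  have h₂ : EqOn (fun u => (f u).2) 0 𝕀 :=
    eqOn_zero_of_LMap_eq_mul hx hN hγ ⟨M, fun u hu => (norm_snd_le (f u)).trans (hM u hu)⟩
      fun n u hu => by simpa [ht] using congrArg Prod.snd (hfix n u hu)
  have h₁ : EqOn (fun u => (f u).1) 0 𝕀 :=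
    eqOn_zero_of_LMap_eq_mul hx hN hα ⟨M, fun u hu => (norm_fst_le (f u)).trans (hM u hu)⟩
      fun n u hu => by simpa [ht, h₂ hu] using congrArg Prod.fst (hfix n u hu)
  funext u
  by_cases hu : u ∈ 𝕀
  · exact Prod.ext (h₁ hu) (h₂ hu)
  · exact hout u hu

lemma indicator_mem_S0set (hx : StrictMono x) (hf : ContinuousOn f 𝕀)
    (hfix : FixEq x α β γ t f) : Set.indicator 𝕀 f ∈ S0set x α β γ :=
  ⟨hf.congr fun u hu => indicator_of_mem hu f, fun u hu => indicator_of_notMem hu f, t,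
    fun n u hu => by
      rw [indicator_of_mem (LMap_mem hx n hu), indicator_of_mem hu]; exact hfix n u hu⟩

lemma exists_mem_S0set_nodes (hx : StrictMono x) (hN : 0 < N) (hα : ∀ n, |α n| < 1)
    (hγ : ∀ n, |γ n| < 1) (w : Fin (N + 1) → ℝ × ℝ) :
    ∃ f ∈ S0set x α β γ, ∀ i, f (x i) = w i := by
  let y i := (w i).1
  let z i := (w i).2
  let q n := lineCoeffs x (z n.castSucc - γ n * z 0) (z n.succ - γ n * z (Fin.last N))
  obtain ⟨f₂, hf₂, hz, hfix₂⟩ := exists_continuous_fif (R := fun n u => (q n).1 * u + (q n).2)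
    (v := z) hx hN hγ (fun n => by fun_prop)
    fun n => ⟨by rw [lineCoeffs_zero]; ring, by rw [lineCoeffs_last hx hN]; ring⟩
  let p n := lineCoeffs x (y n.castSucc - α n * y 0 - β n * z 0)
    (y n.succ - α n * y (Fin.last N) - β n * z (Fin.last N))
  obtain ⟨f₁, hf₁, hy, hfix₁⟩ := exists_continuous_fif
    (R := fun n u => β n * f₂ u + ((p n).1 * u + (p n).2)) (v := y) hx hN hα (fun n => by fun_prop)
    fun n => ⟨by rw [lineCoeffs_zero, hz]; ring, by rw [lineCoeffs_last hx hN, hz]; ring⟩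
  refine ⟨Set.indicator 𝕀 fun u => (f₁ u, f₂ u),
    indicator_mem_S0set hx (hf₁.prodMk hf₂).continuousOn (t := fun n => (p n, q n))
      fun n u hu => ?_, fun i => ?_⟩
  · rw [hfix₁ n u hu, hfix₂ n u hu]
    exact Prod.ext (by ring) rfl
  · rw [indicator_of_mem (node_mem hx i), hy, hz]

variable (x) in
noncomputable def zeroAffinePair : ℝ × ℝ →ₗ[ℝ] ℝ → ℝ × ℝ where
  toFun ab := Set.indicator 𝕀 fun u => (0, ab.1 * u + ab.2)
  map_add' ab cd := by
    funext u
    by_cases hu : u ∈ 𝕀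
    · simp only [indicator_of_mem hu, Pi.add_apply, Prod.fst_add, Prod.snd_add, Prod.mk_add_mk]
      exact Prod.ext (by ring) (by ring)
    · simp [hu]
  map_smul' a ab := by
    funext u
    by_cases hu : u ∈ 𝕀
    · simp only [indicator_of_mem hu, Pi.smul_apply, Prod.smul_fst, Prod.smul_snd, Prod.smul_mk,
        smul_eq_mul, RingHom.id_apply]
      exact Prod.ext (by ring) (by ring)
    · simp [hu]

lemma zeroAffinePair_apply (ab : ℝ × ℝ) :
    zeroAffinePair x ab = Set.indicator 𝕀 fun u => (0, ab.1 * u + ab.2) := rfl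

lemma zeroAffinePair_mem_S0set (hx : StrictMono x) (ab : ℝ × ℝ) :
    zeroAffinePair x ab ∈ S0set x α β γ := by
  -- with `ℓ u = a u + b`: `p_n = -β_n ℓ` and `q_n = ℓ ∘ L_n - γ_n ℓ`, affine since `L_n` is
  refine indicator_mem_S0set hx (by fun_prop) (t := fun n => ((-(β n * ab.1), -(β n * ab.2)),
    (ab.1 * (LMap x n 1 - LMap x n 0) - γ n * ab.1, ab.1 * LMap x n 0 + ab.2 - γ n * ab.2)))
    fun n u _ => ?_
  rw [LMap_eq_affine]
  exact Prod.ext (by ring) (by ring)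

lemma fst_zeroAffinePair (ab : ℝ × ℝ) : π₁ (zeroAffinePair x ab) = 0 := by
  funext u
  by_cases hu : u ∈ 𝕀 <;> simp [zeroAffinePair_apply, hu]

lemma zeroAffinePair_injective (hx : StrictMono x) (hN : 0 < N) :
    Function.Injective (zeroAffinePair x) := by
  refine (injective_iff_map_eq_zero _).2 fun ab h => ?_
  have h0 := congrArg (fun f => (f (x 0)).2) h
  have h1 := congrArg (fun f => (f (x (Fin.last N))).2) h
  simp only [zeroAffinePair_apply, indicator_of_mem (node_mem hx _), Pi.zero_apply,
    Prod.snd_zero] at h0 h1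
  obtain ⟨ha, hb⟩ := eq_zero_of_affine_eq_zero (x_zero_lt_x_last hx hN).ne h0 h1
  exact Prod.ext ha hb

lemma exists_zeroAffinePair_eq {n : Fin N} (hβ : β n ≠ 0)
    (hf : f ∈ S0set x α β γ) (hf₁ : π₁ f = 0) : ∃ ab, zeroAffinePair x ab = f := by
  obtain ⟨-, hout, t, hfix⟩ := hf
  have h₁ (u : ℝ) : (f u).1 = 0 := congrFun hf₁ u
  refine ⟨(-(t n).1.1 / β n, -(t n).1.2 / β n), funext fun u => ?_⟩
  by_cases hu : u ∈ 𝕀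
  · have h := congrArg Prod.fst (hfix n u hu)
    simp only [h₁, mul_zero, zero_add] at h
    rw [zeroAffinePair_apply, indicator_of_mem hu]
    refine Prod.ext (h₁ u).symm ?_
    field_simp
    linarith
  · rw [zeroAffinePair_apply, indicator_of_notMem hu, hout u hu]

lemma S0_inf_ker_fst (hx : StrictMono x) {n : Fin N} (hβ : β n ≠ 0) :
    S0 x α β γ ⊓ LinearMap.ker π₁ = LinearMap.range (zeroAffinePair x) := by
  ext f
  simp only [Submodule.mem_inf, LinearMap.mem_ker, LinearMap.mem_range]
  constructor
  · rintro ⟨hf, hf₁⟩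
    exact exists_zeroAffinePair_eq hβ hf hf₁
  · rintro ⟨ab, rfl⟩
    exact ⟨zeroAffinePair_mem_S0set hx ab, fst_zeroAffinePair ab⟩

noncomputable def nodeEquiv (hx : StrictMono x) (hN : 0 < N) (hα : ∀ n, |α n| < 1)
    (hγ : ∀ n, |γ n| < 1) : S0 x α β γ ≃ₗ[ℝ] (Fin (N + 1) → ℝ × ℝ) :=
  LinearEquiv.ofBijective ((LinearMap.funLeft ℝ (ℝ × ℝ) x).domRestrict (S0 x α β γ))
    ⟨(injective_iff_map_eq_zero _).2 fun f hf =>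
      Subtype.ext (eq_zero_of_mem_S0set_of_nodes hx hN hα hγ f.2 (congrFun hf)),
    fun w =>
      let ⟨f, hf, hw⟩ := exists_mem_S0set_nodes hx hN hα hγ w
      ⟨⟨f, hf⟩, funext hw⟩⟩

lemma finiteDimensional_S0 (hx : StrictMono x) (hN : 0 < N) (hα : ∀ n, |α n| < 1)
    (hγ : ∀ n, |γ n| < 1) : FiniteDimensional ℝ (S0 x α β γ) :=
  (nodeEquiv hx hN hα hγ).symm.finiteDimensional

lemma finrank_S0 (hx : StrictMono x) (hN : 0 < N) (hα : ∀ n, |α n| < 1)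
    (hγ : ∀ n, |γ n| < 1) : finrank ℝ (S0 x α β γ) = 2 * (N + 1) := by
  rw [(nodeEquiv hx hN hα hγ).finrank_eq]
  simp [Module.finrank_pi_fintype, mul_comm]

lemma finrank_map_fst_S0 (hx : StrictMono x) (hα : ∀ n, |α n| < 1) (hγ : ∀ n, |γ n| < 1)
    {n : Fin N} (hβ : β n ≠ 0) : finrank ℝ ((S0 x α β γ).map π₁) = 2 * N := by
  have := finiteDimensional_S0 (β := β) hx n.pos hα hγ
  have h := finrank_map_add_finrank_inf_ker (S0 x α β γ) π₁
  rw [S0_inf_ker_fst hx hβ, LinearMap.finrank_range_of_inj (zeroAffinePair_injective hx n.pos),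
    finrank_S0 hx n.pos hα hγ] at h
  simp only [finrank_prod, finrank_self] at h
  omega

end S0

end FractalInterpolation

theorem stmt6_general {N : ℕ} (hN : 1 ≤ N) (x : Fin (N + 1) → ℝ) (hx : StrictMono x)
    (α β γ : Fin N → ℝ) (hα : ∀ n, |α n| < 1) (hγ : ∀ n, |γ n| < 1)
    (hβ : ∀ n, β n ≠ 0) :
    ((0 : ℝ → ℝ) ∈ S01set x α β γ) ∧
    (∀ g h : ℝ → ℝ, g ∈ S01set x α β γ → h ∈ S01set x α β γ →
      g + h ∈ S01set x α β γ) ∧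
    (∀ (a : ℝ) (g : ℝ → ℝ), g ∈ S01set x α β γ → a • g ∈ S01set x α β γ) ∧
    (∃ b : Fin (2 * N) → (ℝ → ℝ),
      (∀ j, b j ∈ S01set x α β γ) ∧ LinearIndependent ℝ b ∧
      ∀ g ∈ S01set x α β γ, g ∈ Submodule.span ℝ (Set.range b)) := by
  have := FractalInterpolation.finiteDimensional_S0 (β := β) hx hN hα hγ
  rw [FractalInterpolation.S01set_eq_map]
  exact ⟨zero_mem _, fun _ _ => add_mem, fun a _ => Submodule.smul_mem _ a,
    exists_linearIndependent_span_eq_of_finrank_eq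
      (FractalInterpolation.finrank_map_fst_S0 hx hα hγ (hβ ⟨0, hN⟩))⟩

/-- If `β_n ≠ 0` for every `n`, the space of CHFIFs `S₀¹` is a vector space of
dimension `2N`. -/
theorem stmt6 {N : ℕ} (hN : 1 ≤ N) (x : Fin (N + 1) → ℝ) (hx : StrictMono x)
    (α β γ : Fin N → ℝ) (hα : ∀ n, |α n| < 1) (hγ : ∀ n, |γ n| < 1)
    (hβγ : ∀ n, |β n| + |γ n| < 1) (hβ : ∀ n, β n ≠ 0) :
    ((0 : ℝ → ℝ) ∈ S01set x α β γ) ∧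
    (∀ g h : ℝ → ℝ, g ∈ S01set x α β γ → h ∈ S01set x α β γ →
      g + h ∈ S01set x α β γ) ∧
    (∀ (a : ℝ) (g : ℝ → ℝ), g ∈ S01set x α β γ → a • g ∈ S01set x α β γ) ∧
    (∃ b : Fin (2 * N) → (ℝ → ℝ),
      (∀ j, b j ∈ S01set x α β γ) ∧ LinearIndependent ℝ b ∧
      ∀ g ∈ S01set x α β γ, g ∈ Submodule.span ℝ (Set.range b)) :=
  stmt6_general hN x hx α β γ hα hγ hβ
end

section
/- The functions f̃_{0,1}, f̃_{1,1}, f̃_{2,1}, f̃_{3,1} are pairwise orthogonal CHFIFs in L²[0,1] if and only if all of the following hold: (a) |α_1| < 1, |α_2| < 1, |γ_1| < 1, |γ_2| < 1, |β_1| + |γ_1| < 1 and |β_2| + |γ_2| < 1; (b) r_1 = (4 − 4α_1² − 6α_2 − 2α_1α_2 + 3α_1²α_2 − 4α_2² + 3α_2³)/(4(−4 + α_1² − α_1α_2 + α_2²)), s_1 = (4 − 6α_1 − 4α_1² + 3α_1³ − 2α_1α_2 − 4α_2² + 3α_1α_2²)/(4(−4 + α_1² − α_1α_2 + α_2²)),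 and u_{1,1} is the unique value for which ⟨f̃_{1,1}, f̃_{3,1}⟩ = 0; (c) ρ(α_1, α_2) = 0; (d) ζ := ⟨f̃_{0,1}, f̃_{3,1}⟩ = 0 and η := ⟨f̃_{2,1}, f̃_{3,1}⟩ = 0. -/
open Set

/-- `f` is the CHFIF on `[0,1]` (partition `0, 1/2, 1`) with hidden component `g`,
parameters `α₁, α₂, β₁, β₂`, through the data `(0, w₀), (1/2, w₁), (1, w₂)`:
`f` is continuous, satisfies the fixed-point recurrences with some linear
polynomials `p₁, p₂` (determined by the join-up conditions), and interpolates. -/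
def IsCHFIF2 (α₁ α₂ β₁ β₂ : ℝ) (f g : ℝ → ℝ) (w₀ w₁ w₂ : ℝ) : Prop :=
  ContinuousOn f (Icc (0 : ℝ) 1) ∧
  (∃ c₁ d₁ c₂ d₂ : ℝ, ∀ u ∈ Icc (0 : ℝ) 1,
    f (u / 2) = α₁ * f u + β₁ * g u + (c₁ * u + d₁) ∧
    f ((u + 1) / 2) = α₂ * f u + β₂ * g u + (c₂ * u + d₂)) ∧
  f 0 = w₀ ∧ f (1 / 2) = w₁ ∧ f 1 = w₂

/-- `g` is the AFIF on `[0,1]` (partition `0, 1/2, 1`) with parameters `γ₁, γ₂`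
through the data `(0, w₀), (1/2, w₁), (1, w₂)`. -/
def IsAFIF2 (γ₁ γ₂ : ℝ) (g : ℝ → ℝ) (w₀ w₁ w₂ : ℝ) : Prop :=
  ContinuousOn g (Icc (0 : ℝ) 1) ∧
  (∃ e₁ h₁ e₂ h₂ : ℝ, ∀ u ∈ Icc (0 : ℝ) 1,
    g (u / 2) = γ₁ * g u + (e₁ * u + h₁) ∧
    g ((u + 1) / 2) = γ₂ * g u + (e₂ * u + h₂)) ∧
  g 0 = w₀ ∧ g (1 / 2) = w₁ ∧ g 1 = w₂

/-- The polynomial `ρ(α₁, α₂)` of the paper. -/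
def rho (a₁ a₂ : ℝ) : ℝ :=
  8 + 12 * a₁ - 28 * a₁ ^ 2 + 6 * a₁ ^ 3 + 2 * a₁ ^ 4 + 12 * a₂ - 14 * a₁ * a₂ +
    18 * a₁ ^ 2 * a₂ - 7 * a₁ ^ 3 * a₂ - 28 * a₂ ^ 2 + 18 * a₁ * a₂ ^ 2 +
    6 * a₂ ^ 3 - 7 * a₁ * a₂ ^ 3 + 2 * a₂ ^ 4

/-
Once `|γ₁|, |γ₂| < 1`, an AFIF through zero data vanishes, since the fixed-point equation
contracts its sup norm by `max |γᵢ| < 1`. Hence the hidden components of `f̃₀, f̃₁, f̃₂` vanish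
and these functions satisfy `f (u/2) = α₁ f u + ℓ₁ u`, `f ((u+1)/2) = α₂ f u + ℓ₂ u` with affine
`ℓᵢ` fixed by the interpolation data. Splitting `∫₀¹` at `1/2` and substituting these equations
gives linear equations for `∫ f`, `∫ u f u` and `∫ f g`; solving them, `K ⟨f, g⟩` with
`K = 6 (2 - α₁² - α₂²)(2 - α₁ - α₂)(4 - α₁ - α₂) > 0` is an explicit bilinear form (a Gram
matrix) in the data of `f` and `g`. For the data at hand `⟨f̃₀, f̃₁⟩` and `⟨f̃₁, f̃₂⟩` are affine
in `r₁` and `s₁` and vanish exactly at the stated values, while, with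
`D = -4 + α₁² - α₁ α₂ + α₂² < 0`,
`8 D K ⟨f̃₀, f̃₂⟩ = 4 (2 - α₁² - α₂²) ρ(α₁, α₂) - K² ⟨f̃₀, f̃₁⟩ ⟨f̃₁, f̃₂⟩`.
-/

open intervalIntegral Matrix
open MeasureTheory (volume)

lemma eq_zero_iff_eq_div_of_mul_eq {K c x r N D : ℝ} (hK : K ≠ 0) (hc : c ≠ 0) (hD : D ≠ 0)
    (h : K * x = c * (N - D * r)) : x = 0 ↔ r = N / D := by
  rw [← mul_right_inj' hK, mul_zero, h, mul_eq_zero, or_iff_right hc, sub_eq_zero,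
    eq_div_iff hD, mul_comm, eq_comm]

lemma integral_unitInterval_eq_add_halves {F : ℝ → ℝ} (hF : IntervalIntegrable F volume 0 1) :
    2 * ∫ x in (0 : ℝ)..1, F x =
      (∫ u in (0 : ℝ)..1, F (u / 2)) + ∫ u in (0 : ℝ)..1, F ((u + 1) / 2) := by
  have h₁ : (∫ u in (0 : ℝ)..1, F (u / 2)) = 2 * ∫ x in (0 : ℝ)..1 / 2, F x := by
    rw [integral_comp_div F two_ne_zero]; norm_num
  have h₂ : (∫ u in (0 : ℝ)..1, F ((u + 1) / 2)) = 2 * ∫ x in (1 / 2 : ℝ)..1, F x := by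
    simp_rw [add_div]; rw [integral_comp_div_add F two_ne_zero]; norm_num
  have hsub : ∀ {c d : ℝ}, c ∈ Icc (0 : ℝ) 1 → d ∈ Icc (0 : ℝ) 1 →
      IntervalIntegrable F volume c d :=
    fun hc hd => hF.mono_set (uIcc_subset_uIcc (by simpa using hc) (by simpa using hd))
  rw [h₁, h₂, ← mul_add, integral_add_adjacent_intervals (hsub (by norm_num) (by norm_num))
    (hsub (by norm_num) (by norm_num))]

-- The fixed-point equation on `[0, 1]` with `L₁ u = u / 2`, `L₂ u = (u + 1) / 2` of an AFIF with
-- scalings `a₁, a₂`, or of a CHFIF whose hidden component vanishes.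
def IsSelfAffine (a₁ a₂ c₁ d₁ c₂ d₂ : ℝ) (f : ℝ → ℝ) : Prop :=
  ContinuousOn f (Icc 0 1) ∧ ∀ u ∈ Icc (0 : ℝ) 1,
    f (u / 2) = a₁ * f u + (c₁ * u + d₁) ∧ f ((u + 1) / 2) = a₂ * f u + (c₂ * u + d₂)

-- Solving the moment equations of a self-affine function gives this matrix (see
-- `IsSelfAffine.integral_mul_eq_gram`). The reflection `u ↦ 1 - u` swaps `a₁` with `a₂` and
-- reverses the data, whence the symmetry of the entries.
def gramMatrix (a₁ a₂ : ℝ) : Matrix (Fin 3) (Fin 3) ℝ :=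
  let e (a b : ℝ) := 16 - 24 * a - 12 * b - 2 * a ^ 2 + 10 * a * b - 2 * b ^ 2 + 12 * a ^ 3 +
    6 * a ^ 2 * b + 12 * a * b ^ 2 + 6 * b ^ 3 - 2 * (a ^ 2 + b ^ 2) * (a + b) ^ 2
  let m (a b : ℝ) := 2 * (4 - 6 * b - 4 * a ^ 2 - 2 * a * b - 4 * b ^ 2 + 3 * a ^ 2 * b + 3 * b ^ 3)
  let c := -6 * (a₁ + a₂) + 4 * a₁ ^ 2 + 6 * a₁ * a₂ + 4 * a₂ ^ 2 +
    3 * (a₁ ^ 2 + a₂ ^ 2) * (a₁ + a₂) - (a₁ ^ 2 + a₂ ^ 2) * (a₁ + a₂) ^ 2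
  !![e a₁ a₂, m a₁ a₂, c;
     m a₁ a₂, 8 * (4 - a₁ ^ 2 + a₁ * a₂ - a₂ ^ 2), m a₂ a₁;
     c, m a₂ a₁, e a₂ a₁]

namespace IsSelfAffine

variable {a₁ a₂ c₁ d₁ c₂ d₂ : ℝ} {f : ℝ → ℝ}

lemma continuousOn_uIcc (hf : IsSelfAffine a₁ a₂ c₁ d₁ c₂ d₂ f) : ContinuousOn f (uIcc 0 1) := by
  simpa [uIcc_of_le zero_le_one] using hf.1

lemma apply_half (hf : IsSelfAffine a₁ a₂ c₁ d₁ c₂ d₂ f) {u : ℝ} (hu : u ∈ uIcc 0 1) :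
    f (u / 2) = a₁ * f u + (c₁ * u + d₁) :=
  (hf.2 u (by simpa [uIcc_of_le zero_le_one] using hu)).1

lemma apply_half_add_half (hf : IsSelfAffine a₁ a₂ c₁ d₁ c₂ d₂ f) {u : ℝ} (hu : u ∈ uIcc 0 1) :
    f ((u + 1) / 2) = a₂ * f u + (c₂ * u + d₂) :=
  (hf.2 u (by simpa [uIcc_of_le zero_le_one] using hu)).2

lemma coeffs_eq (hf : IsSelfAffine a₁ a₂ c₁ d₁ c₂ d₂ f) :
    c₁ = f (1 / 2) - a₁ * f 1 - (1 - a₁) * f 0 ∧ d₁ = (1 - a₁) * f 0 ∧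
      c₂ = (1 - a₂) * f 1 - f (1 / 2) + a₂ * f 0 ∧ d₂ = f (1 / 2) - a₂ * f 0 := by
  obtain ⟨l₀, r₀⟩ := hf.2 0 (by norm_num)
  obtain ⟨l₁, r₁⟩ := hf.2 1 (by norm_num)
  norm_num at l₀ r₀ l₁ r₁
  exact ⟨by linarith, by linarith, by linarith, by linarith⟩

lemma eqOn_zero (hf : IsSelfAffine a₁ a₂ 0 0 0 0 f) (h₁ : |a₁| < 1) (h₂ : |a₂| < 1) :
    EqOn f 0 (Icc 0 1) := by
  obtain ⟨x, hx, hmax⟩ := isCompact_Icc.exists_isMaxOn (nonempty_Icc.2 zero_le_one) hf.1.abs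
  have hk : max |a₁| |a₂| < 1 := max_lt h₁ h₂
  suffices hx' : |f x| ≤ max |a₁| |a₂| * |f x| by
    have hfx : |f x| = 0 := by nlinarith [abs_nonneg (f x)]
    exact fun u hu => abs_eq_zero.1 (le_antisymm (hfx ▸ hmax hu) (abs_nonneg _))
  obtain ⟨u, hu, hxu⟩ : ∃ u ∈ Icc (0 : ℝ) 1, |f x| ≤ max |a₁| |a₂| * |f u| := by
    rcases le_total x (1 / 2) with hx₂ | hx₂
    · have hu : 2 * x ∈ Icc (0 : ℝ) 1 := ⟨by linarith [hx.1], by linarith⟩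
      have hfx : f x = a₁ * f (2 * x) := by simpa using (hf.2 _ hu).1
      exact ⟨_, hu, by rw [hfx, abs_mul]; gcongr; exact le_max_left _ _⟩
    · have hu : 2 * x - 1 ∈ Icc (0 : ℝ) 1 := ⟨by linarith, by linarith [hx.2]⟩
      have hfx : f x = a₂ * f (2 * x - 1) := by simpa using (hf.2 _ hu).2
      exact ⟨_, hu, by rw [hfx, abs_mul]; gcongr; exact le_max_right _ _⟩
  exact hxu.trans (mul_le_mul_of_nonneg_left (hmax hu) (by positivity))

lemma integral_eq (hf : IsSelfAffine a₁ a₂ c₁ d₁ c₂ d₂ f) :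
    (2 - a₁ - a₂) * ∫ u in (0 : ℝ)..1, f u = c₁ / 2 + d₁ + c₂ / 2 + d₂ := by
  have hc := hf.continuousOn_uIcc
  have h₁ : (∫ u in (0 : ℝ)..1, f (u / 2)) = ∫ u in (0 : ℝ)..1, f u * a₁ + u * c₁ + d₁ :=
    integral_congr fun u hu => by simp only [hf.apply_half hu]; ring
  have h₂ : (∫ u in (0 : ℝ)..1, f ((u + 1) / 2)) = ∫ u in (0 : ℝ)..1, f u * a₂ + u * c₂ + d₂ :=
    integral_congr fun u hu => by simp only [hf.apply_half_add_half hu]; ring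
  have h := integral_unitInterval_eq_add_halves hc.intervalIntegrable
  rw [h₁, h₂] at h
  simp (disch := exact ContinuousOn.intervalIntegrable (by fun_prop)) only
    [integral_add, integral_mul_const, integral_id, integral_const] at h
  linear_combination h

lemma integral_id_mul_eq (hf : IsSelfAffine a₁ a₂ c₁ d₁ c₂ d₂ f) :
    (4 - a₁ - a₂) * ∫ u in (0 : ℝ)..1, u * f u =
      a₂ * (∫ u in (0 : ℝ)..1, f u) + c₁ / 3 + d₁ / 2 + 5 * c₂ / 6 + 3 * d₂ / 2 := by
  have hc := hf.continuousOn_uIcc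
  have h₁ : (∫ u in (0 : ℝ)..1, u / 2 * f (u / 2)) =
      ∫ u in (0 : ℝ)..1, u * f u * (a₁ / 2) + u ^ 2 * (c₁ / 2) + u * (d₁ / 2) :=
    integral_congr fun u hu => by simp only [hf.apply_half hu]; ring
  have h₂ : (∫ u in (0 : ℝ)..1, (u + 1) / 2 * f ((u + 1) / 2)) =
      ∫ u in (0 : ℝ)..1, u * f u * (a₂ / 2) + f u * (a₂ / 2) + u ^ 2 * (c₂ / 2) +
        u * ((c₂ + d₂) / 2) + d₂ / 2 :=
    integral_congr fun u hu => by simp only [hf.apply_half_add_half hu]; ring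
  have h := integral_unitInterval_eq_add_halves (F := fun u => u * f u)
    (ContinuousOn.intervalIntegrable (by fun_prop))
  rw [h₁, h₂] at h
  simp (disch := exact ContinuousOn.intervalIntegrable (by fun_prop)) only
    [integral_add, integral_mul_const, integral_id, integral_pow, integral_const] at h
  linear_combination 2 * h

lemma integral_mul_eq {C₁ D₁ C₂ D₂ : ℝ} {g : ℝ → ℝ} (hf : IsSelfAffine a₁ a₂ c₁ d₁ c₂ d₂ f)
    (hg : IsSelfAffine a₁ a₂ C₁ D₁ C₂ D₂ g) :
    (2 - a₁ ^ 2 - a₂ ^ 2) * ∫ u in (0 : ℝ)..1, f u * g u =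
      a₁ * (C₁ * (∫ u in (0 : ℝ)..1, u * f u) + D₁ * (∫ u in (0 : ℝ)..1, f u) +
          c₁ * (∫ u in (0 : ℝ)..1, u * g u) + d₁ * ∫ u in (0 : ℝ)..1, g u) +
        a₂ * (C₂ * (∫ u in (0 : ℝ)..1, u * f u) + D₂ * (∫ u in (0 : ℝ)..1, f u) +
          c₂ * (∫ u in (0 : ℝ)..1, u * g u) + d₂ * ∫ u in (0 : ℝ)..1, g u) +
        (c₁ * C₁ / 3 + (c₁ * D₁ + C₁ * d₁) / 2 + d₁ * D₁) +
        (c₂ * C₂ / 3 + (c₂ * D₂ + C₂ * d₂) / 2 + d₂ * D₂) := by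
  have hcf := hf.continuousOn_uIcc
  have hcg := hg.continuousOn_uIcc
  have h₁ : (∫ u in (0 : ℝ)..1, f (u / 2) * g (u / 2)) =
      ∫ u in (0 : ℝ)..1, f u * g u * a₁ ^ 2 + u * f u * (a₁ * C₁) + f u * (a₁ * D₁) +
        u * g u * (a₁ * c₁) + g u * (a₁ * d₁) + u ^ 2 * (c₁ * C₁) + u * (c₁ * D₁ + C₁ * d₁) +
        d₁ * D₁ :=
    integral_congr fun u hu => by simp only [hf.apply_half hu, hg.apply_half hu]; ring
  have h₂ : (∫ u in (0 : ℝ)..1, f ((u + 1) / 2) * g ((u + 1) / 2)) =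
      ∫ u in (0 : ℝ)..1, f u * g u * a₂ ^ 2 + u * f u * (a₂ * C₂) + f u * (a₂ * D₂) +
        u * g u * (a₂ * c₂) + g u * (a₂ * d₂) + u ^ 2 * (c₂ * C₂) + u * (c₂ * D₂ + C₂ * d₂) +
        d₂ * D₂ :=
    integral_congr fun u hu => by
      simp only [hf.apply_half_add_half hu, hg.apply_half_add_half hu]; ring
  have h := integral_unitInterval_eq_add_halves (F := fun u => f u * g u)
    (ContinuousOn.intervalIntegrable (by fun_prop))
  rw [h₁, h₂] at h
  simp (disch := exact ContinuousOn.intervalIntegrable (by fun_prop)) only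
    [integral_add, integral_mul_const, integral_id, integral_pow, integral_const] at h
  linear_combination h

theorem integral_mul_eq_gram {C₁ D₁ C₂ D₂ : ℝ} {g : ℝ → ℝ} (hf : IsSelfAffine a₁ a₂ c₁ d₁ c₂ d₂ f)
    (hg : IsSelfAffine a₁ a₂ C₁ D₁ C₂ D₂ g) :
    6 * (2 - a₁ ^ 2 - a₂ ^ 2) * (2 - a₁ - a₂) * (4 - a₁ - a₂) * ∫ u in (0 : ℝ)..1, f u * g u =
      ![f 0, f (1 / 2), f 1] ⬝ᵥ gramMatrix a₁ a₂ *ᵥ ![g 0, g (1 / 2), g 1] := by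
  have hfg := hf.integral_mul_eq hg
  have hf₀ := hf.integral_eq
  have hf₁ := hf.integral_id_mul_eq
  have hg₀ := hg.integral_eq
  have hg₁ := hg.integral_id_mul_eq
  linear_combination (norm := skip) 6 * (2 - a₁ - a₂) * (4 - a₁ - a₂) * hfg +
    6 * (2 - a₁ - a₂) * (a₁ * C₁ + a₂ * C₂) * hf₁ +
    6 * ((4 - a₁ - a₂) * (a₁ * D₁ + a₂ * D₂) + a₂ * (a₁ * C₁ + a₂ * C₂)) * hf₀ +
    6 * (2 - a₁ - a₂) * (a₁ * c₁ + a₂ * c₂) * hg₁ +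
    6 * ((4 - a₁ - a₂) * (a₁ * d₁ + a₂ * d₂) + a₂ * (a₁ * c₁ + a₂ * c₂)) * hg₀
  obtain ⟨rfl, rfl, rfl, rfl⟩ := hf.coeffs_eq
  obtain ⟨rfl, rfl, rfl, rfl⟩ := hg.coeffs_eq
  simp only [gramMatrix, dotProduct, mulVec, of_apply, Fin.sum_univ_three, cons_val_zero,
    cons_val_one, cons_val]
  ring

end IsSelfAffine

lemma IsAFIF2.eqOn_zero {γ₁ γ₂ : ℝ} {g : ℝ → ℝ} (h₁ : |γ₁| < 1) (h₂ : |γ₂| < 1)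
    (hg : IsAFIF2 γ₁ γ₂ g 0 0 0) : EqOn g 0 (Icc 0 1) := by
  obtain ⟨hc, ⟨e₁, k₁, e₂, k₂, hrec⟩, hg₀, hg₁, hg₂⟩ := hg
  have hs : IsSelfAffine γ₁ γ₂ e₁ k₁ e₂ k₂ g := ⟨hc, hrec⟩
  have hcoeffs := hs.coeffs_eq
  simp only [hg₀, hg₁, hg₂, mul_zero, sub_zero, add_zero] at hcoeffs
  obtain ⟨rfl, rfl, rfl, rfl⟩ := hcoeffs
  exact hs.eqOn_zero h₁ h₂

lemma IsCHFIF2.isSelfAffine {α₁ α₂ β₁ β₂ w₀ w₁ w₂ : ℝ} {f g : ℝ → ℝ}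
    (hf : IsCHFIF2 α₁ α₂ β₁ β₂ f g w₀ w₁ w₂) (hg : EqOn g 0 (Icc 0 1)) :
    ∃ c₁ d₁ c₂ d₂, IsSelfAffine α₁ α₂ c₁ d₁ c₂ d₂ f := by
  obtain ⟨hc, ⟨c₁, d₁, c₂, d₂, hrec⟩, -⟩ := hf
  exact ⟨c₁, d₁, c₂, d₂, hc, fun u hu => by simpa [hg hu] using hrec u hu⟩

lemma orthogonal_iff_of_gram {a₁ a₂ r s x y z : ℝ} (h₁ : |a₁| < 1) (h₂ : |a₂| < 1)
    (hx : 6 * (2 - a₁ ^ 2 - a₂ ^ 2) * (2 - a₁ - a₂) * (4 - a₁ - a₂) * x =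
      ![1, r, 0] ⬝ᵥ gramMatrix a₁ a₂ *ᵥ ![0, 1, 0])
    (hy : 6 * (2 - a₁ ^ 2 - a₂ ^ 2) * (2 - a₁ - a₂) * (4 - a₁ - a₂) * y =
      ![1, r, 0] ⬝ᵥ gramMatrix a₁ a₂ *ᵥ ![0, s, 1])
    (hz : 6 * (2 - a₁ ^ 2 - a₂ ^ 2) * (2 - a₁ - a₂) * (4 - a₁ - a₂) * z =
      ![0, 1, 0] ⬝ᵥ gramMatrix a₁ a₂ *ᵥ ![0, s, 1]) :
    (x = 0 ∧ y = 0 ∧ z = 0) ↔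
      (r = (4 - 4 * a₁ ^ 2 - 6 * a₂ - 2 * a₁ * a₂ + 3 * a₁ ^ 2 * a₂ - 4 * a₂ ^ 2 + 3 * a₂ ^ 3) /
          (4 * (-4 + a₁ ^ 2 - a₁ * a₂ + a₂ ^ 2)) ∧
        s = (4 - 6 * a₁ - 4 * a₁ ^ 2 + 3 * a₁ ^ 3 - 2 * a₁ * a₂ - 4 * a₂ ^ 2 + 3 * a₁ * a₂ ^ 2) /
          (4 * (-4 + a₁ ^ 2 - a₁ * a₂ + a₂ ^ 2)) ∧
        rho a₁ a₂ = 0) := by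
  obtain ⟨ha₁, ha₁'⟩ := abs_lt.1 h₁
  obtain ⟨ha₂, ha₂'⟩ := abs_lt.1 h₂
  have hq : 0 < 2 - a₁ ^ 2 - a₂ ^ 2 := by nlinarith
  have hD : -4 + a₁ ^ 2 - a₁ * a₂ + a₂ ^ 2 < 0 := by nlinarith
  have hK : 0 < 6 * (2 - a₁ ^ 2 - a₂ ^ 2) * (2 - a₁ - a₂) * (4 - a₁ - a₂) := by
    have : 0 < 2 - a₁ - a₂ := by linarith
    have : 0 < 4 - a₁ - a₂ := by linarith
    positivity
  generalize 6 * (2 - a₁ ^ 2 - a₂ ^ 2) * (2 - a₁ - a₂) * (4 - a₁ - a₂) = K at hK hx hy hz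
  simp only [gramMatrix, dotProduct, mulVec, of_apply, Fin.sum_univ_three, cons_val_zero,
    cons_val_one, cons_val] at hx hy hz
  have hx₀ : x = 0 ↔ r = (4 - 4 * a₁ ^ 2 - 6 * a₂ - 2 * a₁ * a₂ + 3 * a₁ ^ 2 * a₂ - 4 * a₂ ^ 2 +
      3 * a₂ ^ 3) / (4 * (-4 + a₁ ^ 2 - a₁ * a₂ + a₂ ^ 2)) :=
    eq_zero_iff_eq_div_of_mul_eq hK.ne' two_ne_zero (by linarith) (by rw [hx]; ring)
  have hz₀ : z = 0 ↔ s = (4 - 6 * a₁ - 4 * a₁ ^ 2 + 3 * a₁ ^ 3 - 2 * a₁ * a₂ - 4 * a₂ ^ 2 +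
      3 * a₁ * a₂ ^ 2) / (4 * (-4 + a₁ ^ 2 - a₁ * a₂ + a₂ ^ 2)) :=
    eq_zero_iff_eq_div_of_mul_eq hK.ne' two_ne_zero (by linarith) (by rw [hz]; ring)
  have key : 8 * (-4 + a₁ ^ 2 - a₁ * a₂ + a₂ ^ 2) * (K * y) =
      4 * (2 - a₁ ^ 2 - a₂ ^ 2) * rho a₁ a₂ - (K * x) * (K * z) := by
    rw [hx, hy, hz, rho]; ring
  rw [← hx₀, ← hz₀]
  constructor
  · rintro ⟨rfl, rfl, rfl⟩
    have h : 4 * (2 - a₁ ^ 2 - a₂ ^ 2) * rho a₁ a₂ = 0 := by linear_combination -key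
    exact ⟨rfl, rfl, (mul_eq_zero.1 h).resolve_left (by positivity)⟩
  · rintro ⟨rfl, rfl, hρ⟩
    have h : (8 * (-4 + a₁ ^ 2 - a₁ * a₂ + a₂ ^ 2) * K) * y = 0 := by
      linear_combination key + 4 * (2 - a₁ ^ 2 - a₂ ^ 2) * hρ
    refine ⟨rfl, (mul_eq_zero.1 h).resolve_left ?_, rfl⟩
    exact mul_ne_zero (mul_ne_zero (by norm_num) hD.ne) hK.ne'

theorem stmt14_general (α₁ α₂ β₁ β₂ γ₁ γ₂ r₁ s₁ : ℝ)
    (f0 f1 f2 f3 g0 g1 g2 : ℝ → ℝ)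
    (hg0 : IsAFIF2 γ₁ γ₂ g0 0 0 0) (hg1 : IsAFIF2 γ₁ γ₂ g1 0 0 0)
    (hg2 : IsAFIF2 γ₁ γ₂ g2 0 0 0)
    (hf0 : IsCHFIF2 α₁ α₂ β₁ β₂ f0 g0 1 r₁ 0)
    (hf1 : IsCHFIF2 α₁ α₂ β₁ β₂ f1 g1 0 1 0)
    (hf2 : IsCHFIF2 α₁ α₂ β₁ β₂ f2 g2 0 s₁ 1) :
    ((|α₁| < 1 ∧ |α₂| < 1 ∧ |γ₁| < 1 ∧ |γ₂| < 1 ∧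
        |β₁| + |γ₁| < 1 ∧ |β₂| + |γ₂| < 1) ∧
      (∫ u in (0:ℝ)..1, f0 u * f1 u) = 0 ∧
      (∫ u in (0:ℝ)..1, f0 u * f2 u) = 0 ∧
      (∫ u in (0:ℝ)..1, f0 u * f3 u) = 0 ∧
      (∫ u in (0:ℝ)..1, f1 u * f2 u) = 0 ∧
      (∫ u in (0:ℝ)..1, f1 u * f3 u) = 0 ∧
      (∫ u in (0:ℝ)..1, f2 u * f3 u) = 0)
    ↔
    ((|α₁| < 1 ∧ |α₂| < 1 ∧ |γ₁| < 1 ∧ |γ₂| < 1 ∧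
        |β₁| + |γ₁| < 1 ∧ |β₂| + |γ₂| < 1) ∧
      r₁ = (4 - 4 * α₁ ^ 2 - 6 * α₂ - 2 * α₁ * α₂ + 3 * α₁ ^ 2 * α₂ -
              4 * α₂ ^ 2 + 3 * α₂ ^ 3) /
            (4 * (-4 + α₁ ^ 2 - α₁ * α₂ + α₂ ^ 2)) ∧
      s₁ = (4 - 6 * α₁ - 4 * α₁ ^ 2 + 3 * α₁ ^ 3 - 2 * α₁ * α₂ -
              4 * α₂ ^ 2 + 3 * α₁ * α₂ ^ 2) /
            (4 * (-4 + α₁ ^ 2 - α₁ * α₂ + α₂ ^ 2)) ∧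
      (∫ u in (0:ℝ)..1, f1 u * f3 u) = 0 ∧
      rho α₁ α₂ = 0 ∧
      (∫ u in (0:ℝ)..1, f0 u * f3 u) = 0 ∧
      (∫ u in (0:ℝ)..1, f2 u * f3 u) = 0) := by
  refine and_congr_right fun ⟨hα₁, hα₂, hγ₁, hγ₂, _⟩ => ?_
  obtain ⟨_, _, _, _, h0⟩ := hf0.isSelfAffine (hg0.eqOn_zero hγ₁ hγ₂)
  obtain ⟨_, _, _, _, h1⟩ := hf1.isSelfAffine (hg1.eqOn_zero hγ₁ hγ₂)
  obtain ⟨_, _, _, _, h2⟩ := hf2.isSelfAffine (hg2.eqOn_zero hγ₁ hγ₂)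
  have h01 := h0.integral_mul_eq_gram h1
  have h02 := h0.integral_mul_eq_gram h2
  have h12 := h1.integral_mul_eq_gram h2
  obtain ⟨-, -, v00, v01, v02⟩ := hf0
  obtain ⟨-, -, v10, v11, v12⟩ := hf1
  obtain ⟨-, -, v20, v21, v22⟩ := hf2
  simp only [v00, v01, v02, v10, v11, v12, v20, v21, v22] at h01 h02 h12
  have key := orthogonal_iff_of_gram hα₁ hα₂ h01 h02 h12
  tauto

/-- The functions `f̃_{0,1}, f̃_{1,1}, f̃_{2,1}, f̃_{3,1}` are pairwise orthogonal
CHFIFs in `L²[0,1]` if and only if (a) the parameter bounds hold, (b) `r₁` and `s₁`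
are given by the stated formulas and `u_{1,1}` makes `⟨f̃_{1,1}, f̃_{3,1}⟩ = 0`,
(c) `ρ(α₁, α₂) = 0`, and (d) `ζ = ⟨f̃_{0,1}, f̃_{3,1}⟩ = 0` and
`η = ⟨f̃_{2,1}, f̃_{3,1}⟩ = 0`. -/
theorem stmt14 (α₁ α₂ β₁ β₂ γ₁ γ₂ r₁ s₁ u₁₁ : ℝ)
    (f0 f1 f2 f3 g0 g1 g2 g3 : ℝ → ℝ)
    (hg0 : IsAFIF2 γ₁ γ₂ g0 0 0 0) (hg1 : IsAFIF2 γ₁ γ₂ g1 0 0 0)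
    (hg2 : IsAFIF2 γ₁ γ₂ g2 0 0 0) (hg3 : IsAFIF2 γ₁ γ₂ g3 0 1 0)
    (hf0 : IsCHFIF2 α₁ α₂ β₁ β₂ f0 g0 1 r₁ 0)
    (hf1 : IsCHFIF2 α₁ α₂ β₁ β₂ f1 g1 0 1 0)
    (hf2 : IsCHFIF2 α₁ α₂ β₁ β₂ f2 g2 0 s₁ 1)
    (hf3 : IsCHFIF2 α₁ α₂ β₁ β₂ f3 g3 0 u₁₁ 0) :
    ((|α₁| < 1 ∧ |α₂| < 1 ∧ |γ₁| < 1 ∧ |γ₂| < 1 ∧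
        |β₁| + |γ₁| < 1 ∧ |β₂| + |γ₂| < 1) ∧
      (∫ u in (0:ℝ)..1, f0 u * f1 u) = 0 ∧
      (∫ u in (0:ℝ)..1, f0 u * f2 u) = 0 ∧
      (∫ u in (0:ℝ)..1, f0 u * f3 u) = 0 ∧
      (∫ u in (0:ℝ)..1, f1 u * f2 u) = 0 ∧
      (∫ u in (0:ℝ)..1, f1 u * f3 u) = 0 ∧
      (∫ u in (0:ℝ)..1, f2 u * f3 u) = 0)
    ↔
    ((|α₁| < 1 ∧ |α₂| < 1 ∧ |γ₁| < 1 ∧ |γ₂| < 1 ∧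
        |β₁| + |γ₁| < 1 ∧ |β₂| + |γ₂| < 1) ∧
      r₁ = (4 - 4 * α₁ ^ 2 - 6 * α₂ - 2 * α₁ * α₂ + 3 * α₁ ^ 2 * α₂ -
              4 * α₂ ^ 2 + 3 * α₂ ^ 3) /
            (4 * (-4 + α₁ ^ 2 - α₁ * α₂ + α₂ ^ 2)) ∧
      s₁ = (4 - 6 * α₁ - 4 * α₁ ^ 2 + 3 * α₁ ^ 3 - 2 * α₁ * α₂ -
              4 * α₂ ^ 2 + 3 * α₁ * α₂ ^ 2) /
            (4 * (-4 + α₁ ^ 2 - α₁ * α₂ + α₂ ^ 2)) ∧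
      (∫ u in (0:ℝ)..1, f1 u * f3 u) = 0 ∧
      rho α₁ α₂ = 0 ∧
      (∫ u in (0:ℝ)..1, f0 u * f3 u) = 0 ∧
      (∫ u in (0:ℝ)..1, f2 u * f3 u) = 0) :=
  stmt14_general α₁ α₂ β₁ β₂ γ₁ γ₂ r₁ s₁ f0 f1 f2 f3 g0 g1 g2 hg0 hg1 hg2 hf0 hf1 hf2
end
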